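/- arXiv:1405.5576 — 5 statements merged into one kernel-verified Lean document; each statement's English description precedes it below -/
import Mathlib

section
/- Let g(Δ) = −log det(Δ + P*) be defined on the set F = {Δ symmetric : a·I ⪯ Δ + P* ⪯ b·I} with 0 < a ≤ b < ∞. Then for every Δ ∈ F, g(Δ) − g(0) ≥ −⟨(P*)^{-1}, Δ⟩ + (1/(2b²))‖Δ‖_F², where ⟨X,Y⟩ = Tr(XᵀY) and ‖·‖_F is the Frobenius norm. -/
/-!
Write `P = U diag(λ) Uᵀ` and `Q = Δ + P = V diag(μ) Vᵀ`. The matrix `W = UᵀV` is orthogonal,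
so `w i j = W i j ^ 2` is doubly stochastic, and `log det P`, `log det Q`, `tr(P⁻¹ Δ)` and
`‖Δ‖_F² = ‖Uᵀ Δ V‖_F²` are all `w`-weighted sums of `log λ i`, `log μ j`, `(μ j - λ i) / λ i` and
`(μ j - λ i) ^ 2`. The claim thus follows termwise from its scalar case
`log x - log y + (y - x) / x ≥ (y - x) ^ 2 / (2 b²)` for `x, y ∈ (0, b]`, which is the strong
convexity of `-log` on `(0, b]`.
-/

open Matrix

theorem sq_sub_div_le_log_sub_log_add_sub_div {x y b : ℝ} (hx : 0 < x) (hxb : x ≤ b)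
    (hy : 0 < y) (hyb : y ≤ b) :
    (y - x) ^ 2 / (2 * b ^ 2) ≤ Real.log x - Real.log y + (y - x) / x := by
  set F : ℝ → ℝ := fun t ↦ Real.log x - Real.log t + (t - x) / x - (t - x) ^ 2 / (2 * b ^ 2)
  suffices 0 ≤ F y by simp only [F] at this; linarith
  -- On `(0, b]` the derivative has the sign of `t - x`, so `F` is minimal at `x`, where it vanishes.
  have hF' : ∀ t, 0 < t → HasDerivAt F ((t - x) * (b ^ 2 - x * t) / (x * t * b ^ 2)) t := by
    intro t ht
    have h := (((Real.hasDerivAt_log ht.ne').const_sub (Real.log x)).add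
      (((hasDerivAt_id t).sub_const x).div_const x)).sub
      ((((hasDerivAt_id t).sub_const x).pow 2).div_const (2 * b ^ 2))
    refine h.congr_deriv ?_
    have hb : b ≠ 0 := (hx.trans_le hxb).ne'
    simp only [id]
    field_simp
    ring
  have hF_cont : ∀ s ⊆ Set.Ioi 0, ContinuousOn F s := fun s hs t ht ↦
    (hF' t (hs ht)).continuousAt.continuousWithinAt
  have hFx : F x = 0 := by simp [F]
  rcases le_total x y with hxy | hyx
  · have hmono : MonotoneOn F (Set.Icc x y) := by
      refine monotoneOn_of_hasDerivWithinAt_nonneg (convex_Icc x y)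
        (hF_cont _ fun t ht ↦ hx.trans_le ht.1)
        (fun t ht ↦ (hF' t ?_).hasDerivWithinAt) fun t ht ↦ ?_
      all_goals rw [interior_Icc] at ht
      · exact hx.trans ht.1
      · have : x * t ≤ b ^ 2 := by nlinarith [ht.1, ht.2]
        have ht0 := hx.trans ht.1
        exact div_nonneg (mul_nonneg (by linarith [ht.1]) (by linarith)) (by positivity)
    simpa [hFx] using hmono ⟨le_rfl, hxy⟩ ⟨hxy, le_rfl⟩ hxy
  · have hanti : AntitoneOn F (Set.Icc y x) := by
      refine antitoneOn_of_hasDerivWithinAt_nonpos (convex_Icc y x)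
        (hF_cont _ fun t ht ↦ hy.trans_le ht.1)
        (fun t ht ↦ (hF' t ?_).hasDerivWithinAt) fun t ht ↦ ?_
      all_goals rw [interior_Icc] at ht
      · exact hy.trans ht.1
      · have : x * t ≤ b ^ 2 := by nlinarith [ht.1, ht.2]
        have ht0 := hy.trans ht.1
        exact div_nonpos_of_nonpos_of_nonneg
          (mul_nonpos_of_nonpos_of_nonneg (by linarith [ht.2]) (by linarith)) (by positivity)
    simpa [hFx] using hanti ⟨le_rfl, hyx⟩ ⟨hyx, le_rfl⟩ hyx

namespace Matrix

variable {ι : Type*} [Fintype ι] [DecidableEq ι]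

theorem trace_mul_eq_sum_conj {R : Type*} [CommRing R] [StarRing R]
    (U V : unitaryGroup ι R) (A B : Matrix ι ι R) :
    (A * B).trace = ∑ i, ∑ j, (star (U : Matrix ι ι R) * A * V) i j *
      (star (V : Matrix ι ι R) * B * U) j i := by
  have hU : (U : Matrix ι ι R) * star (U : Matrix ι ι R) = 1 := mem_unitaryGroup_iff.mp U.2
  have hV : (V : Matrix ι ι R) * star (V : Matrix ι ι R) = 1 := mem_unitaryGroup_iff.mp V.2
  have h : star (U : Matrix ι ι R) * A * V * (star (V : Matrix ι ι R) * B * U) =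
      star (U : Matrix ι ι R) * (A * B * U) := by
    simp only [Matrix.mul_assoc, ← Matrix.mul_assoc (V : Matrix ι ι R), hV, Matrix.one_mul]
  calc (A * B).trace = (star (U : Matrix ι ι R) * (A * B * U)).trace := by
        rw [trace_mul_comm (star _), Matrix.mul_assoc, hU, Matrix.mul_one]
    _ = _ := by simp only [← h, trace, diag_apply, mul_apply]

theorem sum_sq_apply_row {W : Matrix ι ι ℝ} (hW : W ∈ unitaryGroup ι ℝ) (i : ι) :
    ∑ j, W i j ^ 2 = 1 := by
  simpa [mul_apply, sq] using congrArg (· i i) (mem_unitaryGroup_iff.mp hW)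

theorem sum_sq_apply_col {W : Matrix ι ι ℝ} (hW : W ∈ unitaryGroup ι ℝ) (j : ι) :
    ∑ i, W i j ^ 2 = 1 := by
  simpa [mul_apply, sq] using congrArg (· j j) (mem_unitaryGroup_iff'.mp hW)

namespace IsHermitian

variable {A : Matrix ι ι ℝ} (hA : A.IsHermitian)

theorem star_eigenvectorUnitary_mul :
    star (hA.eigenvectorUnitary : Matrix ι ι ℝ) * A =
      diagonal hA.eigenvalues * star (hA.eigenvectorUnitary : Matrix ι ι ℝ) := by
  have h := hA.conjStarAlgAut_star_eigenvectorUnitary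
  rw [Unitary.conjStarAlgAut_star_apply, RCLike.ofReal_real_eq_id, Function.id_comp] at h
  rw [← h, Matrix.mul_assoc _ _ (star _), mem_unitaryGroup_iff.mp hA.eigenvectorUnitary.2,
    Matrix.mul_one]

theorem mul_eigenvectorUnitary :
    A * hA.eigenvectorUnitary = hA.eigenvectorUnitary * diagonal hA.eigenvalues := by
  have h := congrArg star hA.star_eigenvectorUnitary_mul
  rwa [star_mul, star_mul, star_star, hA.star_eq, star_eq_conjTranspose, diagonal_conjTranspose,
    star_trivial] at h

theorem star_eigenvectorUnitary_mul_inv (h : ∀ i, hA.eigenvalues i ≠ 0) :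
    star (hA.eigenvectorUnitary : Matrix ι ι ℝ) * A⁻¹ =
      diagonal hA.eigenvalues⁻¹ * star (hA.eigenvectorUnitary : Matrix ι ι ℝ) := by
  have hinv : A⁻¹ = hA.eigenvectorUnitary * diagonal hA.eigenvalues⁻¹ *
      star (hA.eigenvectorUnitary : Matrix ι ι ℝ) := by
    refine inv_eq_left_inv ?_
    have hdiag : (fun i ↦ hA.eigenvalues⁻¹ i * hA.eigenvalues i) = 1 := by
      ext i; simp [h i]
    rw [Matrix.mul_assoc, hA.star_eigenvectorUnitary_mul, Matrix.mul_assoc,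
      ← Matrix.mul_assoc (diagonal _),
      diagonal_mul_diagonal, hdiag, Pi.one_def, diagonal_one, Matrix.one_mul,
      mem_unitaryGroup_iff.mp hA.eigenvectorUnitary.2]
  rw [hinv, ← Matrix.mul_assoc, ← Matrix.mul_assoc,
    mem_unitaryGroup_iff'.mp hA.eigenvectorUnitary.2, Matrix.one_mul]

theorem star_dotProduct_mulVec_eigenvectorBasis (i : ι) :
    star ⇑(hA.eigenvectorBasis i) ⬝ᵥ (A *ᵥ ⇑(hA.eigenvectorBasis i)) = hA.eigenvalues i := by
  simpa using (hA.eigenvalues_eq i).symm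

theorem star_dotProduct_eigenvectorBasis (i : ι) :
    star ⇑(hA.eigenvectorBasis i) ⬝ᵥ ⇑(hA.eigenvectorBasis i) = 1 := by
  have h := orthonormal_iff_ite.mp hA.eigenvectorBasis.orthonormal i i
  rw [if_pos rfl, EuclideanSpace.inner_eq_star_dotProduct] at h
  simpa using h

theorem le_eigenvalues_of_posSemidef_sub {a : ℝ} (h : (A - a • 1).PosSemidef) (i : ι) :
    a ≤ hA.eigenvalues i := by
  have := h.dotProduct_mulVec_nonneg (hA.eigenvectorBasis i)
  rw [sub_mulVec, dotProduct_sub, smul_mulVec, one_mulVec, dotProduct_smul, smul_eq_mul,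
    hA.star_dotProduct_mulVec_eigenvectorBasis, hA.star_dotProduct_eigenvectorBasis] at this
  linarith

theorem eigenvalues_le_of_posSemidef_sub {b : ℝ} (h : (b • 1 - A).PosSemidef) (i : ι) :
    hA.eigenvalues i ≤ b := by
  have := h.dotProduct_mulVec_nonneg (hA.eigenvectorBasis i)
  rw [sub_mulVec, dotProduct_sub, smul_mulVec, one_mulVec, dotProduct_smul, smul_eq_mul,
    hA.star_dotProduct_mulVec_eigenvectorBasis, hA.star_dotProduct_eigenvectorBasis] at this
  linarith

theorem star_eigenvectorUnitary_mul_mul_apply (X : Matrix ι ι ℝ) (i j : ι) :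
    (star (hA.eigenvectorUnitary : Matrix ι ι ℝ) * A * X) i j =
      hA.eigenvalues i * (star (hA.eigenvectorUnitary : Matrix ι ι ℝ) * X) i j := by
  rw [hA.star_eigenvectorUnitary_mul, Matrix.mul_assoc, diagonal_mul]

theorem mul_mul_eigenvectorUnitary_apply (Y : Matrix ι ι ℝ) (i j : ι) :
    (Y * A * hA.eigenvectorUnitary) i j = (Y * hA.eigenvectorUnitary) i j * hA.eigenvalues j := by
  rw [Matrix.mul_assoc, hA.mul_eigenvectorUnitary, ← Matrix.mul_assoc, mul_diagonal]

theorem star_eigenvectorUnitary_mul_inv_mul_apply (h : ∀ i, hA.eigenvalues i ≠ 0)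
    (X : Matrix ι ι ℝ) (i j : ι) :
    (star (hA.eigenvectorUnitary : Matrix ι ι ℝ) * A⁻¹ * X) i j =
      (hA.eigenvalues i)⁻¹ * (star (hA.eigenvectorUnitary : Matrix ι ι ℝ) * X) i j := by
  rw [hA.star_eigenvectorUnitary_mul_inv h, Matrix.mul_assoc, diagonal_mul, Pi.inv_apply]

end IsHermitian

variable {P Q : Matrix ι ι ℝ} (hP : P.IsHermitian) (hQ : Q.IsHermitian)

/-- The entry `(i, j)` is `⟪uᵢ, vⱼ⟫` for the eigenvector bases `u` of `P` and `v` of `Q`. -/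
noncomputable def eigenvectorOverlap : Matrix ι ι ℝ :=
  star (hP.eigenvectorUnitary : Matrix ι ι ℝ) * hQ.eigenvectorUnitary

theorem eigenvectorOverlap_mem_unitaryGroup : eigenvectorOverlap hP hQ ∈ unitaryGroup ι ℝ :=
  Submonoid.mul_mem _ (Unitary.star_mem hP.eigenvectorUnitary.2) hQ.eigenvectorUnitary.2

theorem star_eigenvectorUnitary_mul_eigenvectorUnitary_apply (i j : ι) :
    (star (hQ.eigenvectorUnitary : Matrix ι ι ℝ) * hP.eigenvectorUnitary) j i =
      eigenvectorOverlap hP hQ i j := by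
  rw [eigenvectorOverlap, ← star_star (hP.eigenvectorUnitary : Matrix ι ι ℝ), ← star_mul,
    star_star, star_apply, star_trivial]

theorem trace_inv_mul_sub_eq_sum (h : ∀ i, hP.eigenvalues i ≠ 0) :
    (P⁻¹ * (Q - P)).trace = ∑ i, ∑ j, (hQ.eigenvalues j - hP.eigenvalues i) / hP.eigenvalues i *
      eigenvectorOverlap hP hQ i j ^ 2 := by
  rw [trace_mul_eq_sum_conj hP.eigenvectorUnitary hQ.eigenvectorUnitary]
  refine Finset.sum_congr rfl fun i _ ↦ Finset.sum_congr rfl fun j _ ↦ ?_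
  rw [hP.star_eigenvectorUnitary_mul_inv_mul_apply h, Matrix.mul_sub, Matrix.sub_mul, sub_apply,
    hQ.star_eigenvectorUnitary_mul_mul_apply, hP.mul_mul_eigenvectorUnitary_apply,
    star_eigenvectorUnitary_mul_eigenvectorUnitary_apply hP hQ]
  field_simp [h i]
  unfold eigenvectorOverlap
  ring

theorem sum_sq_sub_apply_eq_sum :
    ∑ i, ∑ j, (Q - P) i j ^ 2 = ∑ i, ∑ j, (hQ.eigenvalues j - hP.eigenvalues i) ^ 2 *
      eigenvectorOverlap hP hQ i j ^ 2 := by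
  have hsymm : ∀ i j, (Q - P) j i = (Q - P) i j := fun i j ↦ by
    rw [sub_apply, sub_apply, ← hP.apply i j, ← hQ.apply i j, star_trivial, star_trivial]
  calc ∑ i, ∑ j, (Q - P) i j ^ 2 = ((Q - P) * (Q - P)).trace := by
        simp only [trace, diag_apply, mul_apply, hsymm, sq]
    _ = _ := by
      rw [trace_mul_eq_sum_conj hP.eigenvectorUnitary hQ.eigenvectorUnitary]
      refine Finset.sum_congr rfl fun i _ ↦ Finset.sum_congr rfl fun j _ ↦ ?_
      rw [Matrix.mul_sub, Matrix.sub_mul, Matrix.mul_sub, Matrix.sub_mul, sub_apply, sub_apply,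
        hQ.star_eigenvectorUnitary_mul_mul_apply, hP.mul_mul_eigenvectorUnitary_apply,
        hP.star_eigenvectorUnitary_mul_mul_apply, hQ.mul_mul_eigenvectorUnitary_apply,
        star_eigenvectorUnitary_mul_eigenvectorUnitary_apply hP hQ]
      unfold eigenvectorOverlap
      ring

theorem log_det_eq_sum_eigenvectorOverlap_left (h : ∀ i, hP.eigenvalues i ≠ 0) :
    Real.log P.det = ∑ i, ∑ j, Real.log (hP.eigenvalues i) * eigenvectorOverlap hP hQ i j ^ 2 := by
  simp only [hP.det_eq_prod_eigenvalues, RCLike.ofReal_real_eq_id, id, ← Finset.mul_sum,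
    sum_sq_apply_row (eigenvectorOverlap_mem_unitaryGroup hP hQ), mul_one,
    Real.log_prod fun i _ ↦ h i]

theorem log_det_eq_sum_eigenvectorOverlap_right (h : ∀ j, hQ.eigenvalues j ≠ 0) :
    Real.log Q.det = ∑ i, ∑ j, Real.log (hQ.eigenvalues j) * eigenvectorOverlap hP hQ i j ^ 2 := by
  rw [Finset.sum_comm]
  simp only [hQ.det_eq_prod_eigenvalues, RCLike.ofReal_real_eq_id, id, ← Finset.mul_sum,
    sum_sq_apply_col (eigenvectorOverlap_mem_unitaryGroup hP hQ), mul_one,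
    Real.log_prod fun i _ ↦ h i]

theorem sum_sq_sub_apply_div_le_log_det_sub_log_det_add_trace {b : ℝ}
    (hPb : ∀ i, 0 < hP.eigenvalues i ∧ hP.eigenvalues i ≤ b)
    (hQb : ∀ j, 0 < hQ.eigenvalues j ∧ hQ.eigenvalues j ≤ b) :
    (∑ i, ∑ j, (Q - P) i j ^ 2) / (2 * b ^ 2) ≤
      Real.log P.det - Real.log Q.det + (P⁻¹ * (Q - P)).trace := by
  have hP0 := fun i ↦ (hPb i).1.ne'
  rw [sum_sq_sub_apply_eq_sum hP hQ, log_det_eq_sum_eigenvectorOverlap_left hP hQ hP0,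
    log_det_eq_sum_eigenvectorOverlap_right hP hQ fun j ↦ (hQb j).1.ne',
    trace_inv_mul_sub_eq_sum hP hQ hP0, ← Finset.sum_sub_distrib, ← Finset.sum_add_distrib,
    Finset.sum_div]
  refine Finset.sum_le_sum fun i _ ↦ ?_
  rw [← Finset.sum_sub_distrib, ← Finset.sum_add_distrib, Finset.sum_div]
  refine Finset.sum_le_sum fun j _ ↦ ?_
  have := mul_le_mul_of_nonneg_right
    (sq_sub_div_le_log_sub_log_add_sub_div (hPb i).1 (hPb i).2 (hQb j).1 (hQb j).2)
    (sq_nonneg (eigenvectorOverlap hP hQ i j))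
  convert this using 1 <;> ring

end Matrix

theorem stmt_3_general {n : ℕ} (Pstar : Matrix (Fin n) (Fin n) ℝ) (a b : ℝ)
    (ha : 0 < a)
    (hPsymm : Pstar.IsSymm)
    (hPa : (Pstar - a • (1 : Matrix (Fin n) (Fin n) ℝ)).PosSemidef)
    (hPb : (b • (1 : Matrix (Fin n) (Fin n) ℝ) - Pstar).PosSemidef)
    (Δ : Matrix (Fin n) (Fin n) ℝ) (hΔsymm : Δ.IsSymm)
    (hΔa : (Δ + Pstar - a • (1 : Matrix (Fin n) (Fin n) ℝ)).PosSemidef)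
    (hΔb : (b • (1 : Matrix (Fin n) (Fin n) ℝ) - (Δ + Pstar)).PosSemidef) :
    -Real.log (Δ + Pstar).det - (-Real.log Pstar.det) ≥
      -((Pstar⁻¹)ᵀ * Δ).trace + (1 / (2 * b ^ 2)) * ∑ i, ∑ j, (Δ i j) ^ 2 := by
  have hP : Pstar.IsHermitian := isHermitian_iff_isSymm.mpr hPsymm
  have hQ : (Δ + Pstar).IsHermitian := isHermitian_iff_isSymm.mpr (hΔsymm.add hPsymm)
  have key := sum_sq_sub_apply_div_le_log_det_sub_log_det_add_trace hP hQ
    (fun i ↦ ⟨ha.trans_le (hP.le_eigenvalues_of_posSemidef_sub hPa i),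
      hP.eigenvalues_le_of_posSemidef_sub hPb i⟩)
    (fun j ↦ ⟨ha.trans_le (hQ.le_eigenvalues_of_posSemidef_sub hΔa j),
      hQ.eigenvalues_le_of_posSemidef_sub hΔb j⟩)
  rw [add_sub_cancel_right] at key
  rw [transpose_nonsing_inv, hPsymm.eq, one_div_mul_eq_div]
  linarith

/-- strong convexity lower bound for `g(Δ) = -log det(Δ + P*)` on
`F = {Δ symmetric : a·I ⪯ Δ + P* ⪯ b·I}` with `0 < a ≤ b`:
`g(Δ) - g(0) ≥ -⟨(P*)⁻¹, Δ⟩ + (1/(2b²))‖Δ‖_F²`. -/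
theorem stmt_3 {n : ℕ} (Pstar : Matrix (Fin n) (Fin n) ℝ) (a b : ℝ)
    (ha : 0 < a) (hab : a ≤ b)
    (hPsymm : Pstar.IsSymm)
    (hPa : (Pstar - a • (1 : Matrix (Fin n) (Fin n) ℝ)).PosSemidef)
    (hPb : (b • (1 : Matrix (Fin n) (Fin n) ℝ) - Pstar).PosSemidef)
    (Δ : Matrix (Fin n) (Fin n) ℝ) (hΔsymm : Δ.IsSymm)
    (hΔa : (Δ + Pstar - a • (1 : Matrix (Fin n) (Fin n) ℝ)).PosSemidef)
    (hΔb : (b • (1 : Matrix (Fin n) (Fin n) ℝ) - (Δ + Pstar)).PosSemidef) :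
    -Real.log (Δ + Pstar).det - (-Real.log Pstar.det) ≥
      -((Pstar⁻¹)ᵀ * Δ).trace + (1 / (2 * b ^ 2)) * ∑ i, ∑ j, (Δ i j) ^ 2 :=
  stmt_3_general Pstar a b ha hPsymm hPa hPb Δ hΔsymm hΔa hΔb
end

section
/- Let r, d, ĉ ∈ ℝ^{n²} satisfy ‖d‖² = n, dᵀr = n, ‖r‖² > n, and dᵀĉ > 0. Then the unique minimizer (θ̂_v, θ̂₀) of (1/2)‖θ_v r + θ₀ d − ĉ‖² over θ_v ≥ 0, θ₀ ≥ 0 is given by: (0, dᵀĉ/n) if rᵀĉ ≤ dᵀĉ; ((rᵀĉ − dᵀĉ)/(‖r‖² − n), (dᵀĉ·‖r‖²/n − rᵀĉ)/(‖r‖² − n)) if dᵀĉ < rᵀĉ < dᵀĉ·‖r‖²/n; and (rᵀĉ/‖r‖², 0) if rᵀĉ ≥ dᵀĉ·‖r‖²/n. -/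
/-!
The objective `f(x, y) = ½‖x r + y d - c‖²` is a quadratic, so its expansion at any point `(a, b)`
is exact: `f(a + u, b + v) - f(a, b)` is the gradient term `u g_r + v g_d` plus `½‖u r + v d‖²`.
Under `‖d‖² = dᵀr = n < ‖r‖²` the last term equals `½(n (u + v)² + (‖r‖² - n) u²)`, which is
positive unless `u = v = 0`. In each of the three cases the claimed point satisfies the KKT
conditions (nonnegative gradient, complementary slackness), so the gradient term is nonnegative
on the quadrant and the claimed point is the strict minimizer there.
-/

open Finset Matrix

section NonnegLeastSquares

variable {ι : Type*} [Fintype ι] (r d c : ι → ℝ)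

noncomputable def lsqObjective (x y : ℝ) : ℝ :=
  (1 / 2) * ∑ i, (x * r i + y * d i - c i) ^ 2

theorem lsqObjective_sub_lsqObjective (a b x y : ℝ) :
    lsqObjective r d c x y - lsqObjective r d c a b =
      (x - a) * r ⬝ᵥ (a • r + b • d - c) + (y - b) * d ⬝ᵥ (a • r + b • d - c) +
        (1 / 2) * ((x - a) • r + (y - b) • d) ⬝ᵥ ((x - a) • r + (y - b) • d) := by
  simp only [lsqObjective, dotProduct, Pi.add_apply, Pi.sub_apply, Pi.smul_apply, smul_eq_mul,
    mul_sum, ← sum_add_distrib, ← sum_sub_distrib]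
  exact sum_congr rfl fun i _ => by ring

theorem lsqObjective_lt_of_kkt
    (hpos : ∀ u v : ℝ, (u, v) ≠ 0 → 0 < (u • r + v • d) ⬝ᵥ (u • r + v • d)) {a b : ℝ}
    (hgr : 0 ≤ r ⬝ᵥ (a • r + b • d - c)) (hgd : 0 ≤ d ⬝ᵥ (a • r + b • d - c))
    (hsr : a * r ⬝ᵥ (a • r + b • d - c) = 0) (hsd : b * d ⬝ᵥ (a • r + b • d - c) = 0)
    {x y : ℝ} (hx : 0 ≤ x) (hy : 0 ≤ y) (hne : (x, y) ≠ (a, b)) :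
    lsqObjective r d c a b < lsqObjective r d c x y := by
  rw [← sub_pos, lsqObjective_sub_lsqObjective]
  have hquad := hpos (x - a) (y - b) (sub_ne_zero.mpr hne)
  nlinarith [mul_nonneg hx hgr, mul_nonneg hy hgd]

variable {r d c} {m : ℝ}

/-- The Gram matrix `[[r ⬝ᵥ r, m], [m, m]]` is positive definite. -/
theorem smul_add_smul_dotProduct_self_pos (hm : 0 < m) (hd : d ⬝ᵥ d = m) (hdr : d ⬝ᵥ r = m)
    (hr : m < r ⬝ᵥ r) {u v : ℝ} (huv : (u, v) ≠ 0) :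
    0 < (u • r + v • d) ⬝ᵥ (u • r + v • d) := by
  have hexp : (u • r + v • d) ⬝ᵥ (u • r + v • d) = m * (u + v) ^ 2 + (r ⬝ᵥ r - m) * u ^ 2 := by
    simp only [add_dotProduct, dotProduct_add, smul_dotProduct, dotProduct_smul, smul_eq_mul,
      dotProduct_comm r d, hd, hdr]
    ring
  rw [hexp]
  rcases eq_or_ne u 0 with rfl | hu
  · have hv : v ≠ 0 := fun hv => huv (by simp [hv])
    nlinarith [sq_pos_of_ne_zero hv]
  · nlinarith [sq_nonneg (u + v), sq_pos_of_ne_zero hu]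

theorem lsqObjective_lt_of_kkt_of_gram (hm : 0 < m) (hd : d ⬝ᵥ d = m) (hdr : d ⬝ᵥ r = m)
    (hr : m < r ⬝ᵥ r) {a b : ℝ}
    (hgr : 0 ≤ a * r ⬝ᵥ r + b * m - r ⬝ᵥ c) (hgd : 0 ≤ (a + b) * m - d ⬝ᵥ c)
    (hsr : a * (a * r ⬝ᵥ r + b * m - r ⬝ᵥ c) = 0) (hsd : b * ((a + b) * m - d ⬝ᵥ c) = 0)
    {x y : ℝ} (hx : 0 ≤ x) (hy : 0 ≤ y) (hne : (x, y) ≠ (a, b)) :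
    lsqObjective r d c a b < lsqObjective r d c x y := by
  have hgr' : r ⬝ᵥ (a • r + b • d - c) = a * r ⬝ᵥ r + b * m - r ⬝ᵥ c := by
    simp only [dotProduct_sub, dotProduct_add, dotProduct_smul, smul_eq_mul, dotProduct_comm r d,
      hdr]
  have hgd' : d ⬝ᵥ (a • r + b • d - c) = (a + b) * m - d ⬝ᵥ c := by
    simp only [dotProduct_sub, dotProduct_add, dotProduct_smul, smul_eq_mul, hd, hdr]
    ring
  exact lsqObjective_lt_of_kkt r d c (fun _ _ => smul_add_smul_dotProduct_self_pos hm hd hdr hr)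
    (hgr' ▸ hgr) (hgd' ▸ hgd) (hgr' ▸ hsr) (hgd' ▸ hsd) hx hy hne

theorem lsqObjective_zero_div_lt_of_le (hm : 0 < m) (hd : d ⬝ᵥ d = m) (hdr : d ⬝ᵥ r = m)
    (hr : m < r ⬝ᵥ r) (h : r ⬝ᵥ c ≤ d ⬝ᵥ c) {x y : ℝ} (hx : 0 ≤ x) (hy : 0 ≤ y)
    (hne : (x, y) ≠ (0, d ⬝ᵥ c / m)) :
    lsqObjective r d c 0 (d ⬝ᵥ c / m) < lsqObjective r d c x y := by
  have hgd : (0 + d ⬝ᵥ c / m) * m - d ⬝ᵥ c = 0 := by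
    rw [zero_add, div_mul_cancel₀ _ hm.ne', sub_self]
  exact lsqObjective_lt_of_kkt_of_gram hm hd hdr hr (by linarith) hgd.ge (zero_mul _)
    (by rw [hgd, mul_zero]) hx hy hne

theorem lsqObjective_stationary_lt (hm : 0 < m) (hd : d ⬝ᵥ d = m) (hdr : d ⬝ᵥ r = m)
    (hr : m < r ⬝ᵥ r) {x y : ℝ} (hx : 0 ≤ x) (hy : 0 ≤ y)
    (hne : (x, y) ≠ ((r ⬝ᵥ c - d ⬝ᵥ c) / (r ⬝ᵥ r - m),
      (d ⬝ᵥ c * r ⬝ᵥ r / m - r ⬝ᵥ c) / (r ⬝ᵥ r - m))) :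
    lsqObjective r d c ((r ⬝ᵥ c - d ⬝ᵥ c) / (r ⬝ᵥ r - m))
      ((d ⬝ᵥ c * r ⬝ᵥ r / m - r ⬝ᵥ c) / (r ⬝ᵥ r - m)) < lsqObjective r d c x y := by
  have hrm : r ⬝ᵥ r - m ≠ 0 := sub_ne_zero.mpr hr.ne'
  have hgr : (r ⬝ᵥ c - d ⬝ᵥ c) / (r ⬝ᵥ r - m) * r ⬝ᵥ r +
      (d ⬝ᵥ c * r ⬝ᵥ r / m - r ⬝ᵥ c) / (r ⬝ᵥ r - m) * m - r ⬝ᵥ c = 0 := by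
    field_simp
    ring
  have hgd : ((r ⬝ᵥ c - d ⬝ᵥ c) / (r ⬝ᵥ r - m) +
      (d ⬝ᵥ c * r ⬝ᵥ r / m - r ⬝ᵥ c) / (r ⬝ᵥ r - m)) * m - d ⬝ᵥ c = 0 := by
    field_simp
    ring
  exact lsqObjective_lt_of_kkt_of_gram hm hd hdr hr hgr.ge hgd.ge (by rw [hgr, mul_zero])
    (by rw [hgd, mul_zero]) hx hy hne

theorem lsqObjective_div_zero_lt_of_le (hm : 0 < m) (hd : d ⬝ᵥ d = m) (hdr : d ⬝ᵥ r = m)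
    (hr : m < r ⬝ᵥ r) (h : d ⬝ᵥ c * r ⬝ᵥ r / m ≤ r ⬝ᵥ c) {x y : ℝ} (hx : 0 ≤ x) (hy : 0 ≤ y)
    (hne : (x, y) ≠ (r ⬝ᵥ c / r ⬝ᵥ r, 0)) :
    lsqObjective r d c (r ⬝ᵥ c / r ⬝ᵥ r) 0 < lsqObjective r d c x y := by
  have hrr : 0 < r ⬝ᵥ r := hm.trans hr
  have hgr : r ⬝ᵥ c / r ⬝ᵥ r * r ⬝ᵥ r + 0 * m - r ⬝ᵥ c = 0 := by
    rw [div_mul_cancel₀ _ hrr.ne', zero_mul, add_zero, sub_self]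
  have hgd : 0 ≤ (r ⬝ᵥ c / r ⬝ᵥ r + 0) * m - d ⬝ᵥ c := by
    rw [div_le_iff₀ hm] at h
    rw [add_zero, div_mul_eq_mul_div, sub_nonneg, le_div_iff₀ hrr]
    linarith
  exact lsqObjective_lt_of_kkt_of_gram hm hd hdr hr hgr.ge hgd (by rw [hgr, mul_zero])
    (zero_mul _) hx hy hne

end NonnegLeastSquares

theorem stmt_11_general {n : ℕ} (r d c : Fin (n ^ 2) → ℝ)
    (hd : ∑ i, (d i) ^ 2 = (n : ℝ))
    (hdr : ∑ i, d i * r i = (n : ℝ))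
    (hr : (n : ℝ) < ∑ i, (r i) ^ 2)
    (obj : ℝ → ℝ → ℝ)
    (hobj : obj = fun θv θ0 => (1 / 2) * ∑ i, (θv * r i + θ0 * d i - c i) ^ 2)
    (rc dc rr : ℝ)
    (hrc : rc = ∑ i, r i * c i) (hdc' : dc = ∑ i, d i * c i)
    (hrr : rr = ∑ i, (r i) ^ 2) :
    (rc ≤ dc →
      ∀ θv θ0 : ℝ, 0 ≤ θv → 0 ≤ θ0 → (θv, θ0) ≠ ((0 : ℝ), dc / n) →
        obj 0 (dc / n) < obj θv θ0) ∧
    (dc < rc → rc < dc * rr / n →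
      ∀ θv θ0 : ℝ, 0 ≤ θv → 0 ≤ θ0 →
        (θv, θ0) ≠ ((rc - dc) / (rr - n), (dc * rr / n - rc) / (rr - n)) →
        obj ((rc - dc) / (rr - n)) ((dc * rr / n - rc) / (rr - n)) < obj θv θ0) ∧
    (dc * rr / n ≤ rc →
      ∀ θv θ0 : ℝ, 0 ≤ θv → 0 ≤ θ0 → (θv, θ0) ≠ (rc / rr, (0 : ℝ)) →
        obj (rc / rr) 0 < obj θv θ0) := by
  have hn : (0 : ℝ) < n := by
    rcases Nat.eq_zero_or_pos n with rfl | hn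
    · simp at hr
    · exact_mod_cast hn
  have hrr' : rr = r ⬝ᵥ r := by simp only [hrr, dotProduct, sq]
  replace hd : d ⬝ᵥ d = n := by simpa only [dotProduct, sq] using hd
  replace hr : (n : ℝ) < r ⬝ᵥ r := by simpa only [dotProduct, sq] using hr
  subst hobj hrc hdc' hrr'
  exact ⟨fun h _ _ => lsqObjective_zero_div_lt_of_le hn hd hdr hr h,
    fun _ _ _ _ => lsqObjective_stationary_lt hn hd hdr hr,
    fun h _ _ => lsqObjective_div_zero_lt_of_le hn hd hdr hr h⟩

/-- closed-form solution of the two-variable nonnegative least squares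
problem `min_{θ_v ≥ 0, θ₀ ≥ 0} (1/2)‖θ_v r + θ₀ d - ĉ‖²` under ‖d‖² = n, dᵀr = n,
‖r‖² > n, dᵀĉ > 0, in the three KKT cases. -/
theorem stmt_11 {n : ℕ} (r d c : Fin (n ^ 2) → ℝ)
    (hd : ∑ i, (d i) ^ 2 = (n : ℝ))
    (hdr : ∑ i, d i * r i = (n : ℝ))
    (hr : (n : ℝ) < ∑ i, (r i) ^ 2)
    (hdc : 0 < ∑ i, d i * c i)
    (obj : ℝ → ℝ → ℝ)
    (hobj : obj = fun θv θ0 => (1 / 2) * ∑ i, (θv * r i + θ0 * d i - c i) ^ 2)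
    (rc dc rr : ℝ)
    (hrc : rc = ∑ i, r i * c i) (hdc' : dc = ∑ i, d i * c i)
    (hrr : rr = ∑ i, (r i) ^ 2) :
    (rc ≤ dc →
      ∀ θv θ0 : ℝ, 0 ≤ θv → 0 ≤ θ0 → (θv, θ0) ≠ ((0 : ℝ), dc / n) →
        obj 0 (dc / n) < obj θv θ0) ∧
    (dc < rc → rc < dc * rr / n →
      ∀ θv θ0 : ℝ, 0 ≤ θv → 0 ≤ θ0 →
        (θv, θ0) ≠ ((rc - dc) / (rr - n), (dc * rr / n - rc) / (rr - n)) →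
        obj ((rc - dc) / (rr - n)) ((dc * rr / n - rc) / (rr - n)) < obj θv θ0) ∧
    (dc * rr / n ≤ rc →
      ∀ θv θ0 : ℝ, 0 ≤ θv → 0 ≤ θ0 → (θv, θ0) ≠ (rc / rr, (0 : ℝ)) →
        obj (rc / rr) 0 < obj θv θ0) :=
  stmt_11_general r d c hd hdr hr obj hobj rc dc rr hrc hdc' hrr
end

section
/- Let Ψ(P) = ⟨S,P⟩ − log det(P) + 1_Q(P) where Q = {P symmetric : a·I ⪯ P ⪯ b·I} with 0 < a ≤ b < ∞. Suppose P̄ − (1/ρ)S has eigendecomposition U·diag(λ̄)·Uᵀ. Then the proximal map prox_{Ψ/ρ}(P̄) = argmin_P {Ψ(P) + (ρ/2)‖P − P̄‖_F²} equals U·diag(λ*)·Uᵀ, where λ*_i = max{min{(λ̄_i + √(λ̄_i² + 4/ρ))/2, b}, a} for each i (equivalently the clamped positive root of ρλ² − ρλ̄_iλ − 1 = 0). -/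
/-!
Conjugating by `U` gives `F (U X Uᵀ) = ρ/2 ‖X - diag λ̄‖² - log det X + const`, and the constraint
`a • 1 ⪯ X ⪯ b • 1` is invariant under this conjugation, so it suffices to compare a feasible `M`
with `D = diag λ*`. Expanding `‖M - diag λ̄‖²` around `D` and bounding `log det M` by the tangent of
the concave function `log det` at `D`, the difference of the objectives is at least
`ρ/2 ‖M - D‖² + ∑ᵢ (Mᵢᵢ - λ*ᵢ) (ρ (λ*ᵢ - λ̄ᵢ) - 1/λ*ᵢ)`. Each summand is nonnegative because
`Mᵢᵢ ∈ [a, b]` and `λ*ᵢ` is the projection onto `[a, b]` of the zero of the increasing function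
`x ↦ ρ (x - λ̄ᵢ) - 1/x`, so the difference is positive as soon as `M ≠ D`.
-/

open Matrix

/-- The positive root of `ρ x² - ρ λ x - 1 = 0`. -/
noncomputable def proxRoot (ρ lam : ℝ) : ℝ := (lam + √(lam ^ 2 + 4 / ρ)) / 2

theorem proxRoot_pos {ρ : ℝ} (hρ : 0 < ρ) (lam : ℝ) : 0 < proxRoot ρ lam := by
  have : |lam| < √(lam ^ 2 + 4 / ρ) := by
    rw [← Real.sqrt_sq_eq_abs]
    exact Real.sqrt_lt_sqrt (sq_nonneg _) (by linarith [div_pos four_pos hρ])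
  unfold proxRoot
  linarith [neg_abs_le lam]

theorem mul_proxRoot_sub_sub_inv_eq_zero {ρ : ℝ} (hρ : 0 < ρ) (lam : ℝ) :
    ρ * (proxRoot ρ lam - lam) - (proxRoot ρ lam)⁻¹ = 0 := by
  have hquad : ρ * (proxRoot ρ lam - lam) * proxRoot ρ lam = 1 := by
    have hsq := Real.sq_sqrt (by positivity : 0 ≤ lam ^ 2 + 4 / ρ)
    calc ρ * (proxRoot ρ lam - lam) * proxRoot ρ lam
        = ρ / 4 * (√(lam ^ 2 + 4 / ρ) ^ 2 - lam ^ 2) := by unfold proxRoot; ring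
      _ = 1 := by rw [hsq]; field_simp; ring
  exact sub_eq_zero.mpr (eq_inv_of_mul_eq_one_left hquad)

theorem monotoneOn_mul_sub_sub_inv {ρ : ℝ} (hρ : 0 < ρ) (lam : ℝ) :
    MonotoneOn (fun x => ρ * (x - lam) - x⁻¹) (Set.Ioi 0) := by
  intro x hx y _ hxy
  have := inv_anti₀ hx hxy
  dsimp only
  nlinarith

theorem sub_clamp_mul_nonneg_of_monotoneOn {g : ℝ → ℝ} {s : Set ℝ} (hg : MonotoneOn g s)
    {r a b m : ℝ} (hr : r ∈ s) (ha : a ∈ s) (hb : b ∈ s) (hab : a ≤ b) (hgr : g r = 0)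
    (hm : m ∈ Set.Icc a b) :
    0 ≤ (m - max (min r b) a) * g (max (min r b) a) := by
  rcases le_total r a with hra | har
  · rw [min_eq_left (hra.trans hab), max_eq_right hra]
    exact mul_nonneg (sub_nonneg.mpr hm.1) (hgr ▸ hg hr ha hra)
  rcases le_total b r with hbr | hrb
  · rw [min_eq_right hbr, max_eq_left hab]
    exact mul_nonneg_of_nonpos_of_nonpos (sub_nonpos.mpr hm.2) (hgr ▸ hg hb hr hbr)
  · rw [min_eq_left hrb, max_eq_left har, hgr, mul_zero]

namespace Matrix

variable {ι : Type*}

section Trace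

variable [Fintype ι] {R : Type*} [CommRing R]

theorem trace_transpose_mul_eq_sum (X Y : Matrix ι ι R) :
    trace (Xᵀ * Y) = ∑ i, ∑ j, X i j * Y i j := by
  simp only [trace, diag, mul_apply, transpose_apply]
  exact Finset.sum_comm

theorem trace_transpose_mul_comm (X Y : Matrix ι ι R) : trace (Xᵀ * Y) = trace (Yᵀ * X) := by
  rw [← trace_transpose, transpose_mul, transpose_transpose]

theorem trace_transpose_mul_self_add (X Y : Matrix ι ι R) :
    trace ((X + Y)ᵀ * (X + Y)) = trace (Xᵀ * X) + 2 * trace (Xᵀ * Y) + trace (Yᵀ * Y) := by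
  rw [transpose_add, add_mul, mul_add, mul_add, trace_add, trace_add, trace_add,
    trace_transpose_mul_comm Y X]
  ring

theorem trace_transpose_mul_diagonal [DecidableEq ι] (X : Matrix ι ι R) (d : ι → R) :
    trace (Xᵀ * diagonal d) = ∑ i, X i i * d i := by
  simp [trace, mul_diagonal]

theorem trace_transpose_mul_self_conj [DecidableEq ι] {U : Matrix ι ι R} (hU : Uᵀ * U = 1)
    (X : Matrix ι ι R) : trace ((U * X * Uᵀ)ᵀ * (U * X * Uᵀ)) = trace (Xᵀ * X) := by
  have hconj : (U * X * Uᵀ)ᵀ * (U * X * Uᵀ) = U * (Xᵀ * X) * Uᵀ := by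
    simp only [transpose_mul, transpose_transpose, mul_assoc]
    rw [← mul_assoc Uᵀ U, hU, one_mul]
  rw [hconj, trace_mul_cycle, hU, one_mul]

theorem det_conj_of_transpose_mul_self_eq_one [DecidableEq ι] {U : Matrix ι ι R}
    (hU : Uᵀ * U = 1) (X : Matrix ι ι R) : det (U * X * Uᵀ) = det X := by
  rw [det_mul, det_mul, mul_comm, ← mul_assoc, ← det_mul, hU, det_one, one_mul]

theorem trace_transpose_mul_self_pos {X : Matrix ι ι ℝ} (hX : X ≠ 0) : 0 < trace (Xᵀ * X) := by
  rw [← conjTranspose_eq_transpose_of_trivial]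
  exact (posSemidef_conjTranspose_mul_self X).trace_nonneg.lt_of_ne'
    (trace_conjTranspose_mul_self_eq_zero_iff.not.mpr hX)

theorem trace_transpose_mul_add_sum_sq_sub_eq {ρ : ℝ} (hρ : ρ ≠ 0) (S A X : Matrix ι ι ℝ) :
    trace (Sᵀ * X) + ρ / 2 * ∑ i, ∑ j, (X i j - (A + ρ⁻¹ • S) i j) ^ 2
      = ρ / 2 * trace ((X - A)ᵀ * (X - A)) + (trace (Aᵀ * S) + (2 * ρ)⁻¹ * trace (Sᵀ * S)) := by
  simp only [trace_transpose_mul_eq_sum, Finset.mul_sum, ← Finset.sum_add_distrib]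
  refine Finset.sum_congr rfl fun i _ => Finset.sum_congr rfl fun j _ => ?_
  simp only [sub_apply, add_apply, smul_apply, smul_eq_mul]
  field_simp
  ring

end Trace

section Loewner

variable [DecidableEq ι] {X U : Matrix ι ι ℝ} {c : ℝ}

theorem PosSemidef.le_diag_of_sub_smul_one (h : (X - c • 1).PosSemidef) (i : ι) : c ≤ X i i := by
  simpa using h.diag_nonneg (i := i)

theorem PosSemidef.diag_le_of_smul_one_sub (h : (c • 1 - X).PosSemidef) (i : ι) : X i i ≤ c := by
  simpa using h.diag_nonneg (i := i)

theorem PosSemidef.posDef_of_sub_smul_one (h : (X - c • 1).PosSemidef) (hc : 0 < c) :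
    X.PosDef := by
  simpa using PosDef.posSemidef_add h (PosDef.one.smul hc)

variable [Fintype ι]

theorem PosSemidef.conj_sub_smul_one (hU : U * Uᵀ = 1) (h : (X - c • 1).PosSemidef) :
    (U * X * Uᵀ - c • 1).PosSemidef := by
  have hconj : U * X * Uᵀ - c • 1 = U * (X - c • 1) * Uᴴ := by
    rw [conjTranspose_eq_transpose_of_trivial, mul_sub, sub_mul, Matrix.mul_smul, mul_one,
      Matrix.smul_mul, hU]
  exact hconj ▸ h.mul_mul_conjTranspose_same U

theorem PosSemidef.smul_one_sub_conj (hU : U * Uᵀ = 1) (h : (c • 1 - X).PosSemidef) :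
    (c • 1 - U * X * Uᵀ).PosSemidef := by
  have hconj : c • 1 - U * X * Uᵀ = U * (c • 1 - X) * Uᴴ := by
    rw [conjTranspose_eq_transpose_of_trivial, mul_sub, sub_mul, Matrix.mul_smul, mul_one,
      Matrix.smul_mul, hU]
  exact hconj ▸ h.mul_mul_conjTranspose_same U

theorem conj_diagonal_isSymm_and_bounds (hU : U * Uᵀ = 1) {d : ι → ℝ} {a b : ℝ}
    (hd : ∀ i, d i ∈ Set.Icc a b) :
    (U * diagonal d * Uᵀ).IsSymm ∧ (U * diagonal d * Uᵀ - a • 1).PosSemidef ∧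
      (b • 1 - U * diagonal d * Uᵀ).PosSemidef := by
  refine ⟨?_, PosSemidef.conj_sub_smul_one hU ?_, PosSemidef.smul_one_sub_conj hU ?_⟩
  · simp only [IsSymm, transpose_mul, transpose_transpose, (isSymm_diagonal d).eq, mul_assoc]
  all_goals
    rw [smul_one_eq_diagonal, diagonal_sub, posSemidef_diagonal_iff]
  · exact fun i => sub_nonneg.mpr (hd i).1
  · exact fun i => sub_nonneg.mpr (hd i).2

end Loewner

section LogDet

variable [Fintype ι] [DecidableEq ι]

theorem PosDef.log_det_le_trace_sub_card {X : Matrix ι ι ℝ} (hX : X.PosDef) :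
    Real.log X.det ≤ X.trace - Fintype.card ι := by
  have hpos := hX.eigenvalues_pos
  rw [hX.isHermitian.det_eq_prod_eigenvalues, hX.isHermitian.trace_eq_sum_eigenvalues]
  simp only [RCLike.ofReal_real_eq_id, id]
  rw [Real.log_prod fun i _ => (hpos i).ne']
  calc ∑ i, Real.log (hX.isHermitian.eigenvalues i)
      ≤ ∑ i, (hX.isHermitian.eigenvalues i - 1) :=
        Finset.sum_le_sum fun i _ => Real.log_le_sub_one_of_pos (hpos i)
    _ = _ := by simp [Finset.sum_sub_distrib]

/-- Apply `log_det_le_trace_sub_card` to `D^{-1/2} M D^{-1/2}` with `D = diagonal d`. -/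
theorem PosDef.log_det_le_log_det_diagonal_add {M : Matrix ι ι ℝ} (hM : M.PosDef)
    {d : ι → ℝ} (hd : ∀ i, 0 < d i) :
    Real.log M.det ≤ Real.log (diagonal d).det + ∑ i, (M i i - d i) / d i := by
  set E := diagonal fun i => (√(d i))⁻¹
  have hsq (i : ι) : (√(d i))⁻¹ * (√(d i))⁻¹ = (d i)⁻¹ := by
    rw [← mul_inv, Real.mul_self_sqrt (hd i).le]
  have hE : IsUnit E := by
    rw [isUnit_diagonal]
    exact Pi.isUnit_iff.mpr fun i => (inv_pos.mpr (Real.sqrt_pos.mpr (hd i))).ne'.isUnit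
  have hX : (E * M * Eᴴ).PosDef :=
    hM.mul_mul_conjTranspose_same (vecMul_injective_iff_isUnit.mpr hE)
  have hdet : (E * M * Eᴴ).det = M.det / (diagonal d).det := by
    rw [conjTranspose_eq_transpose_of_trivial, diagonal_transpose, det_mul, det_mul, det_diagonal,
      det_diagonal, div_eq_mul_inv, ← Finset.prod_inv_distrib]
    simp_rw [← hsq, Finset.prod_mul_distrib]
    ring
  have htrace : (E * M * Eᴴ).trace = ∑ i, M i i / d i := by
    rw [conjTranspose_eq_transpose_of_trivial, diagonal_transpose, trace]
    refine Finset.sum_congr rfl fun i _ => ?_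
    simp only [diag, mul_diagonal, diagonal_mul, E]
    rw [div_eq_mul_inv, ← hsq]
    ring
  have hdpos : 0 < (diagonal d).det := by
    rw [det_diagonal]
    exact Finset.prod_pos fun i _ => hd i
  have key := hX.log_det_le_trace_sub_card
  rw [hdet, htrace, Real.log_div hM.det_pos.ne' hdpos.ne'] at key
  have hsum : ∑ i, (M i i - d i) / d i = ∑ i, M i i / d i - Fintype.card ι := by
    simp [sub_div, div_self (hd _).ne', Finset.sum_sub_distrib]
  linarith

theorem half_dist_sq_sub_log_det_diagonal_lt {ρ : ℝ} (hρ : 0 < ρ) {M : Matrix ι ι ℝ}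
    (hM : M.PosDef) {d lam : ι → ℝ} (hd : ∀ i, 0 < d i) (hne : M ≠ diagonal d)
    (hopt : ∀ i, 0 ≤ (M i i - d i) * (ρ * (d i - lam i) - (d i)⁻¹)) :
    ρ / 2 * trace ((diagonal d - diagonal lam)ᵀ * (diagonal d - diagonal lam))
        - Real.log (diagonal d).det
      < ρ / 2 * trace ((M - diagonal lam)ᵀ * (M - diagonal lam)) - Real.log M.det := by
  have hexpand := trace_transpose_mul_self_add (M - diagonal d) (diagonal d - diagonal lam)
  rw [sub_add_sub_cancel, diagonal_sub, trace_transpose_mul_diagonal] at hexpand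
  simp only [sub_apply, diagonal_apply_eq] at hexpand
  rw [diagonal_sub]
  have hdist := trace_transpose_mul_self_pos (sub_ne_zero.mpr hne)
  have hlog := hM.log_det_le_log_det_diagonal_add hd
  have hlinear : ∑ i, (M i i - d i) / d i ≤ ρ * ∑ i, (M i i - d i) * (d i - lam i) := by
    rw [Finset.mul_sum, ← sub_nonneg, ← Finset.sum_sub_distrib]
    exact Finset.sum_nonneg fun i _ => (hopt i).trans_eq (by ring)
  nlinarith

end LogDet

theorem trace_sub_log_det_add_sum_sq_conj [Fintype ι] [DecidableEq ι] {ρ : ℝ} (hρ : ρ ≠ 0)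
    {U : Matrix ι ι ℝ} (hU : Uᵀ * U = 1) (S Λ X : Matrix ι ι ℝ) :
    trace (Sᵀ * (U * X * Uᵀ)) - Real.log (U * X * Uᵀ).det
        + ρ / 2 * ∑ i, ∑ j, ((U * X * Uᵀ) i j - (U * Λ * Uᵀ + ρ⁻¹ • S) i j) ^ 2
      = ρ / 2 * trace ((X - Λ)ᵀ * (X - Λ)) - Real.log X.det
        + (trace ((U * Λ * Uᵀ)ᵀ * S) + (2 * ρ)⁻¹ * trace (Sᵀ * S)) := by
  rw [sub_add_eq_add_sub, trace_transpose_mul_add_sum_sq_sub_eq hρ, ← sub_mul, ← mul_sub,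
    trace_transpose_mul_self_conj hU, det_conj_of_transpose_mul_self_eq_one hU]
  ring

end Matrix

theorem stmt_13_general {n : ℕ} (S Pbar : Matrix (Fin n) (Fin n) ℝ) (ρ a b : ℝ)
    (hρ : 0 < ρ) (ha : 0 < a) (hab : a ≤ b)
    (U : Matrix (Fin n) (Fin n) ℝ) (hU : Uᵀ * U = 1)
    (lam : Fin n → ℝ)
    (hdec : Pbar - ρ⁻¹ • S = U * Matrix.diagonal lam * Uᵀ)
    (lamstar : Fin n → ℝ)
    (hlamstar : ∀ i, lamstar i =
      max (min ((lam i + Real.sqrt ((lam i) ^ 2 + 4 / ρ)) / 2) b) a)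
    (Pstar : Matrix (Fin n) (Fin n) ℝ)
    (hPstar : Pstar = U * Matrix.diagonal lamstar * Uᵀ)
    (F : Matrix (Fin n) (Fin n) ℝ → ℝ)
    (hF : F = fun P => (Sᵀ * P).trace - Real.log P.det +
      ρ / 2 * ∑ i, ∑ j, (P i j - Pbar i j) ^ 2) :
    (Pstar.IsSymm ∧
      (Pstar - a • (1 : Matrix (Fin n) (Fin n) ℝ)).PosSemidef ∧
      (b • (1 : Matrix (Fin n) (Fin n) ℝ) - Pstar).PosSemidef) ∧
    ∀ P : Matrix (Fin n) (Fin n) ℝ, P.IsSymm →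
      (P - a • (1 : Matrix (Fin n) (Fin n) ℝ)).PosSemidef →
      (b • (1 : Matrix (Fin n) (Fin n) ℝ) - P).PosSemidef →
      P ≠ Pstar → F Pstar < F P := by
  have hUU : U * Uᵀ = 1 := mul_eq_one_comm.mp hU
  have hlamstar_mem (i : Fin n) : lamstar i ∈ Set.Icc a b := by
    rw [hlamstar i]
    exact ⟨le_max_right _ _, max_le (min_le_right _ _) hab⟩
  refine ⟨hPstar ▸ conj_diagonal_isSymm_and_bounds hUU hlamstar_mem,
    fun P _ hPa hPb hne => ?_⟩
  set M := Uᵀ * P * U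
  have hPM : P = U * M * Uᵀ := by
    simp only [M, ← mul_assoc, hUU, one_mul]
    rw [mul_assoc, hUU, mul_one]
  have hUt : Uᵀ * Uᵀᵀ = 1 := by rw [transpose_transpose, hU]
  have hMa : (M - a • 1).PosSemidef := by
    simpa only [M, transpose_transpose] using hPa.conj_sub_smul_one hUt
  have hMb : (b • 1 - M).PosSemidef := by
    simpa only [M, transpose_transpose] using hPb.smul_one_sub_conj hUt
  have hopt (i : Fin n) :
      0 ≤ (M i i - lamstar i) * (ρ * (lamstar i - lam i) - (lamstar i)⁻¹) := by
    rw [hlamstar i]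
    exact sub_clamp_mul_nonneg_of_monotoneOn (monotoneOn_mul_sub_sub_inv hρ (lam i))
      (proxRoot_pos hρ (lam i)) ha (ha.trans_le hab) hab
      (mul_proxRoot_sub_sub_inv_eq_zero hρ (lam i))
      ⟨hMa.le_diag_of_sub_smul_one i, hMb.diag_le_of_smul_one_sub i⟩
  have hMne : M ≠ diagonal lamstar := fun h => hne (by rw [hPM, h, hPstar])
  have hPbar : Pbar = U * diagonal lam * Uᵀ + ρ⁻¹ • S := by rw [← hdec, sub_add_cancel]
  simp only [hF, hPbar, hPstar, hPM, trace_sub_log_det_add_sum_sq_conj hρ.ne' hU]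
  exact add_lt_add_left (half_dist_sq_sub_log_det_diagonal_lt hρ
    (hMa.posDef_of_sub_smul_one ha) (fun i => ha.trans_le (hlamstar_mem i).1) hMne hopt) _

/-- the prox of `Ψ(P) = ⟨S,P⟩ - log det P + 1_Q(P)`,
`Q = {P symmetric : a·I ⪯ P ⪯ b·I}` (0 < a ≤ b), at P̄ is computed spectrally: if
`P̄ - (1/ρ)S = U diag(λ̄) Uᵀ` with U orthogonal, then the unique minimizer over Q of
`P ↦ ⟨S,P⟩ - log det P + (ρ/2)‖P - P̄‖_F²` is `U diag(λ*) Uᵀ`, where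
`λ*_i = max{min{(λ̄_i + √(λ̄_i² + 4/ρ))/2, b}, a}`. -/
theorem stmt_13 {n : ℕ} (S Pbar : Matrix (Fin n) (Fin n) ℝ) (ρ a b : ℝ)
    (hρ : 0 < ρ) (ha : 0 < a) (hab : a ≤ b)
    (hS : S.IsSymm) (hPbar : Pbar.IsSymm)
    (U : Matrix (Fin n) (Fin n) ℝ) (hU : Uᵀ * U = 1)
    (lam : Fin n → ℝ)
    (hdec : Pbar - ρ⁻¹ • S = U * Matrix.diagonal lam * Uᵀ)
    (lamstar : Fin n → ℝ)
    (hlamstar : ∀ i, lamstar i =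
      max (min ((lam i + Real.sqrt ((lam i) ^ 2 + 4 / ρ)) / 2) b) a)
    (Pstar : Matrix (Fin n) (Fin n) ℝ)
    (hPstar : Pstar = U * Matrix.diagonal lamstar * Uᵀ)
    (F : Matrix (Fin n) (Fin n) ℝ → ℝ)
    (hF : F = fun P => (Sᵀ * P).trace - Real.log P.det +
      ρ / 2 * ∑ i, ∑ j, (P i j - Pbar i j) ^ 2) :
    (Pstar.IsSymm ∧
      (Pstar - a • (1 : Matrix (Fin n) (Fin n) ℝ)).PosSemidef ∧
      (b • (1 : Matrix (Fin n) (Fin n) ℝ) - Pstar).PosSemidef) ∧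
    ∀ P : Matrix (Fin n) (Fin n) ℝ, P.IsSymm →
      (P - a • (1 : Matrix (Fin n) (Fin n) ℝ)).PosSemidef →
      (b • (1 : Matrix (Fin n) (Fin n) ℝ) - P).PosSemidef →
      P ≠ Pstar → F Pstar < F P :=
  stmt_13_general S Pbar ρ a b hρ ha hab U hU lam hdec lamstar hlamstar Pstar hPstar F hF
end

section
/- Suppose P̂ solves min_{P ≻ 0} ⟨S,P⟩ − log det(P) + α⟨G,|P|⟩, where S ⪰ 0, α > 0, and G has all entries ≥ G_min > 0. Then σ_max(P̂) ≤ n/(α·G_min) and σ_min(P̂) ≥ 1/(‖S‖₂ + α‖G‖_F). -/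
/-!
Both bounds are first-order optimality conditions of `P̂` along two curves in the cone of positive
definite matrices. Along the ray `t ↦ t • P̂` the objective equals
`t (⟨S, P̂⟩ + α ⟨G, |P̂|⟩) - n log t + const`, so stationarity at `t = 1` is the complementarity
identity `⟨S, P̂⟩ + α ⟨G, |P̂|⟩ = n`; as `⟨S, P̂⟩ ≥ 0` this bounds `Σ |P̂ᵢⱼ|`, which dominates the
quadratic form of `P̂`. Along `ε ↦ P̂ + ε x xᵀ` the matrix determinant lemma and the triangle
inequality bound the objective by `F P̂ + ε (xᵀ S x + α ⟨G, |x xᵀ|⟩) - log (1 + ε xᵀ P̂⁻¹ x)`, so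
the one-sided derivative at `ε = 0` gives `xᵀ P̂⁻¹ x ≤ K ‖x‖²` with `K = ‖S‖₂ + α ‖G‖_F`,
i.e. `P̂⁻¹ ≤ K • 1`, and conjugating by `√P̂` turns this into `K⁻¹ • 1 ≤ P̂`.
-/

open Matrix
open scoped Matrix.Norms.L2Operator
open Finset Filter Topology

namespace Matrix

variable {ι : Type*} [Fintype ι]

lemma abs_mul_le_dotProduct_self (x : ι → ℝ) (i j : ι) : |x i * x j| ≤ x ⬝ᵥ x := by
  have hx : ∀ k, x k ^ 2 ≤ x ⬝ᵥ x := fun k => by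
    simpa [dotProduct, sq] using single_le_sum (fun i _ => mul_self_nonneg (x i)) (mem_univ k)
  rw [abs_mul]
  nlinarith [sq_abs (x i), sq_abs (x j), sq_nonneg (|x i| - |x j|), hx i, hx j]

lemma dotProduct_mulVec_eq_sum_sum (A : Matrix ι ι ℝ) (x : ι → ℝ) :
    x ⬝ᵥ A *ᵥ x = ∑ i, ∑ j, A i j * (x i * x j) := by
  simp only [dotProduct, mulVec, mul_sum]
  exact sum_congr rfl fun i _ => sum_congr rfl fun j _ => by ring

lemma dotProduct_mulVec_le_sum_abs_mul (A : Matrix ι ι ℝ) (x : ι → ℝ) :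
    x ⬝ᵥ A *ᵥ x ≤ (∑ i, ∑ j, |A i j|) * (x ⬝ᵥ x) := by
  rw [dotProduct_mulVec_eq_sum_sum, sum_mul]
  refine sum_le_sum fun i _ => ?_
  rw [sum_mul]
  refine sum_le_sum fun j _ => ?_
  calc A i j * (x i * x j) ≤ |A i j| * |x i * x j| := by rw [← abs_mul]; exact le_abs_self _
    _ ≤ |A i j| * (x ⬝ᵥ x) := by gcongr; exact abs_mul_le_dotProduct_self x i j

lemma posSemidef_sub_of_dotProduct_mulVec_le {A B : Matrix ι ι ℝ} (hA : A.IsHermitian)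
    (hB : B.IsHermitian) (h : ∀ x, x ⬝ᵥ A *ᵥ x ≤ x ⬝ᵥ B *ᵥ x) : (B - A).PosSemidef :=
  .of_dotProduct_mulVec_nonneg (hB.sub hA) fun x => by
    simpa [sub_mulVec, dotProduct_sub] using h x

lemma mulVec_dotProduct_mulVec_mulVec (N M : Matrix ι ι ℝ) (y : ι → ℝ) :
    (N *ᵥ y) ⬝ᵥ M *ᵥ (N *ᵥ y) = y ⬝ᵥ (Nᵀ * M * N) *ᵥ y := by
  rw [← mulVec_mulVec, ← mulVec_mulVec, dotProduct_mulVec y Nᵀ, vecMul_transpose]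

def weightedAbsSum (W A : Matrix ι ι ℝ) : ℝ :=
  ∑ i, ∑ j, W i j * |A i j|

section weightedAbsSum

variable {W A B : Matrix ι ι ℝ}

lemma weightedAbsSum_smul {t : ℝ} (ht : 0 ≤ t) :
    weightedAbsSum W (t • A) = t * weightedAbsSum W A := by
  simp only [weightedAbsSum, smul_apply, smul_eq_mul, abs_mul, abs_of_nonneg ht, mul_sum]
  exact sum_congr rfl fun i _ => sum_congr rfl fun j _ => by ring

lemma weightedAbsSum_add_le (hW : ∀ i j, 0 ≤ W i j) :
    weightedAbsSum W (A + B) ≤ weightedAbsSum W A + weightedAbsSum W B := by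
  simp only [weightedAbsSum, ← sum_add_distrib, ← mul_add, add_apply]
  exact sum_le_sum fun i _ => sum_le_sum fun j _ =>
    mul_le_mul_of_nonneg_left (abs_add_le _ _) (hW i j)

lemma mul_sum_abs_le_weightedAbsSum {g : ℝ} (hW : ∀ i j, g ≤ W i j) :
    g * ∑ i, ∑ j, |A i j| ≤ weightedAbsSum W A := by
  simp only [weightedAbsSum, mul_sum]
  exact sum_le_sum fun i _ => sum_le_sum fun j _ =>
    mul_le_mul_of_nonneg_right (hW i j) (abs_nonneg _)

lemma weightedAbsSum_vecMulVec_self_le (W : Matrix ι ι ℝ) (x : ι → ℝ) :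
    weightedAbsSum W (vecMulVec x x) ≤ √(∑ i, ∑ j, W i j ^ 2) * (x ⬝ᵥ x) := by
  have hx : ∑ i, ∑ j, |x i * x j| ^ 2 = (x ⬝ᵥ x) ^ 2 := by
    rw [sq, dotProduct, sum_mul_sum]
    exact sum_congr rfl fun i _ => sum_congr rfl fun j _ => by rw [sq_abs]; ring
  have hcs := Real.sum_mul_le_sqrt_mul_sqrt univ (fun p : ι × ι => W p.1 p.2)
    (fun p => |x p.1 * x p.2|)
  simp only [Fintype.sum_prod_type] at hcs
  have hxx : 0 ≤ x ⬝ᵥ x := sum_nonneg fun i _ => mul_self_nonneg (x i)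
  rwa [hx, Real.sqrt_sq hxx] at hcs

end weightedAbsSum

variable [DecidableEq ι]

lemma dotProduct_mulVec_le_l2_opNorm_mul (A : Matrix ι ι ℝ) (x : ι → ℝ) :
    x ⬝ᵥ A *ᵥ x ≤ ‖A‖ * (x ⬝ᵥ x) := by
  let y := (EuclideanSpace.equiv ι ℝ).symm x
  have hy : ‖y‖ ^ 2 = x ⬝ᵥ x := by
    rw [EuclideanSpace.norm_sq_eq]; simp [y, dotProduct, sq]
  calc x ⬝ᵥ A *ᵥ x = inner ℝ y ((EuclideanSpace.equiv ι ℝ).symm (A *ᵥ x)) := by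
        simp [y, PiLp.inner_apply, dotProduct, mul_comm]
    _ ≤ ‖y‖ * (‖A‖ * ‖y‖) :=
        (real_inner_le_norm _ _).trans (by gcongr; exact A.l2_opNorm_mulVec y)
    _ = ‖A‖ * (x ⬝ᵥ x) := by rw [← hy]; ring

lemma posSemidef_smul_one_sub_of_dotProduct_mulVec_le {A : Matrix ι ι ℝ} (hA : A.IsHermitian)
    {c : ℝ} (h : ∀ x, x ⬝ᵥ A *ᵥ x ≤ c * (x ⬝ᵥ x)) : (c • 1 - A).PosSemidef :=
  posSemidef_sub_of_dotProduct_mulVec_le hA (isHermitian_one.smul (.all c)) fun x => by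
    simpa [smul_mulVec] using h x

lemma posSemidef_sub_smul_one_of_le_dotProduct_mulVec {A : Matrix ι ι ℝ} (hA : A.IsHermitian)
    {c : ℝ} (h : ∀ x, c * (x ⬝ᵥ x) ≤ x ⬝ᵥ A *ᵥ x) : (A - c • 1).PosSemidef :=
  posSemidef_sub_of_dotProduct_mulVec_le (isHermitian_one.smul (.all c)) hA fun x => by
    simpa [smul_mulVec] using h x

lemma det_add_vecMulVec {R : Type*} [CommRing R] {A : Matrix ι ι R} (hA : IsUnit A.det)
    (u v : ι → R) : (A + vecMulVec u v).det = A.det * (1 + v ⬝ᵥ A⁻¹ *ᵥ u) := by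
  rw [vecMulVec_eq Unit, det_add_mul _ _ hA, det_unique (1 + _), Matrix.add_apply, one_apply_eq,
    Matrix.mul_assoc, ← replicateCol_mulVec, replicateRow_mul_replicateCol_apply]

open scoped MatrixOrder in
lemma PosSemidef.trace_mul_nonneg {A B : Matrix ι ι ℝ} (hA : A.PosSemidef) (hB : B.PosSemidef) :
    0 ≤ (A * B).trace := by
  obtain ⟨C, rfl⟩ := CStarAlgebra.nonneg_iff_eq_star_mul_self.mp hB.nonneg
  rw [star_eq_conjTranspose, ← mul_assoc, trace_mul_cycle]
  exact (hA.mul_mul_conjTranspose_same C).trace_nonneg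

open scoped MatrixOrder in
lemma PosDef.dotProduct_self_le_mul_of_inv {P : Matrix ι ι ℝ} (hP : P.PosDef) {c : ℝ}
    (h : ∀ x, x ⬝ᵥ P⁻¹ *ᵥ x ≤ c * (x ⬝ᵥ x)) (y : ι → ℝ) : y ⬝ᵥ y ≤ c * (y ⬝ᵥ P *ᵥ y) := by
  set N := CFC.sqrt P
  have hNN : N * N = P := CFC.sqrt_mul_sqrt_self P hP.posSemidef.nonneg
  have hNt : Nᵀ = N := by
    simpa using (CFC.sqrt_nonneg P).posSemidef.isHermitian.eq
  have hN : IsUnit N.det := by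
    have : N.det * N.det = P.det := by rw [← det_mul, hNN]
    exact isUnit_iff_ne_zero.mpr fun h0 => hP.det_pos.ne' (by rw [← this, h0, zero_mul])
  have h1 : (N *ᵥ y) ⬝ᵥ P⁻¹ *ᵥ (N *ᵥ y) = y ⬝ᵥ y := by
    rw [mulVec_dotProduct_mulVec_mulVec, hNt, ← hNN, Matrix.mul_inv_rev, ← mul_assoc,
      mul_nonsing_inv _ hN, one_mul, nonsing_inv_mul _ hN, one_mulVec]
  have h2 : (N *ᵥ y) ⬝ᵥ (N *ᵥ y) = y ⬝ᵥ P *ᵥ y := by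
    simpa [hNt, hNN] using mulVec_dotProduct_mulVec_mulVec N 1 y
  simpa only [h1, h2] using h (N *ᵥ y)

end Matrix

lemma eq_of_isMinOn_mul_sub_mul_log {c k : ℝ}
    (h : IsMinOn (fun t => t * c - k * Real.log t) (Set.Ioi 0) 1) : c = k := by
  have hderiv : HasDerivAt (fun t => t * c - k * Real.log t) (1 * c - k * 1⁻¹) 1 :=
    ((hasDerivAt_id' 1).mul_const c).sub ((Real.hasDerivAt_log one_ne_zero).const_mul k)
  rw [one_mul, inv_one, mul_one] at hderiv
  exact sub_eq_zero.mp ((h.isLocalMin (Ioi_mem_nhds one_pos)).hasDerivAt_eq_zero hderiv)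

lemma le_of_isMinOn_mul_sub_log_one_add {q b : ℝ}
    (h : IsMinOn (fun ε => ε * b - Real.log (1 + ε * q)) (Set.Ici 0) 0) : q ≤ b := by
  set φ := fun ε => ε * b - Real.log (1 + ε * q)
  have hderiv : HasDerivAt φ (1 * b - 1 * q / (1 + 0 * q)) 0 :=
    ((hasDerivAt_id' 0).mul_const b).sub
      ((((hasDerivAt_id' 0).mul_const q).const_add 1).log (by simp))
  rw [zero_mul, add_zero, div_one, one_mul, one_mul] at hderiv
  have hslope : ∀ᶠ ε in 𝓝[>] 0, 0 ≤ ε⁻¹ • (φ (0 + ε) - φ 0) :=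
    eventually_nhdsWithin_of_forall fun ε hε =>
      smul_nonneg (inv_nonneg.mpr hε.le) (sub_nonneg.mpr (h (by simpa using hε.le)))
  exact sub_nonneg.mp (ge_of_tendsto hderiv.tendsto_slope_zero_right hslope)

namespace GraphicalLasso

variable {ι : Type*} [Fintype ι] [DecidableEq ι] {S G P : Matrix ι ι ℝ} {α : ℝ}

noncomputable def objective (S G : Matrix ι ι ℝ) (α : ℝ) (P : Matrix ι ι ℝ) : ℝ :=
  (Sᵀ * P).trace - Real.log P.det + α * weightedAbsSum G P

lemma objective_smul (hP : P.PosDef) {t : ℝ} (ht : 0 < t) :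
    objective S G α (t • P) =
      t * ((Sᵀ * P).trace + α * weightedAbsSum G P) - Fintype.card ι * Real.log t -
        Real.log P.det := by
  rw [objective, Matrix.mul_smul, trace_smul, weightedAbsSum_smul ht.le, det_smul,
    Real.log_mul (pow_ne_zero _ ht.ne') hP.det_pos.ne', Real.log_pow, smul_eq_mul]
  ring

lemma objective_add_smul_vecMulVec_le (hP : P.PosDef) (hα : 0 ≤ α)
    (hG : ∀ i j, 0 ≤ G i j) (x : ι → ℝ) {ε : ℝ} (hε : 0 ≤ ε) :
    objective S G α (P + ε • vecMulVec x x) ≤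
      objective S G α P +
        ε * (x ⬝ᵥ S *ᵥ x + α * weightedAbsSum G (vecMulVec x x)) -
        Real.log (1 + ε * (x ⬝ᵥ P⁻¹ *ᵥ x)) := by
  have htrace : (Sᵀ * vecMulVec x x).trace = x ⬝ᵥ S *ᵥ x := by
    rw [mul_vecMulVec, trace_vecMulVec, mulVec_transpose, ← dotProduct_mulVec]
  have hdet : (P + ε • vecMulVec x x).det = P.det * (1 + ε * (x ⬝ᵥ P⁻¹ *ᵥ x)) := by
    rw [← smul_vecMulVec, det_add_vecMulVec (isUnit_iff_ne_zero.mpr hP.det_pos.ne'),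
      mulVec_smul, dotProduct_smul, smul_eq_mul]
  have hq : 0 ≤ x ⬝ᵥ P⁻¹ *ᵥ x := by
    simpa using hP.inv.posSemidef.dotProduct_mulVec_nonneg x
  have habs := (weightedAbsSum_add_le (A := P) (B := ε • vecMulVec x x) hG).trans_eq
    (congrArg _ (weightedAbsSum_smul hε))
  rw [objective, objective, mul_add, trace_add, Matrix.mul_smul,
    trace_smul, htrace, hdet, Real.log_mul hP.det_pos.ne' (by positivity), smul_eq_mul]
  nlinarith [mul_le_mul_of_nonneg_left habs hα]

theorem trace_add_weightedAbsSum_eq_card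
    (hmin : IsMinOn (objective S G α) {Q | Q.PosDef} P) (hP : P.PosDef) :
    (Sᵀ * P).trace + α * weightedAbsSum G P = Fintype.card ι := by
  refine eq_of_isMinOn_mul_sub_mul_log (isMinOn_iff.mpr fun t (ht : 0 < t) => ?_)
  have hle := isMinOn_iff.mp hmin _ (hP.smul ht)
  have hone := objective_smul (S := S) (G := G) (α := α) hP one_pos
  rw [one_smul] at hone
  rw [hone, objective_smul hP ht] at hle
  simp only [Real.log_one, mul_zero, sub_zero] at hle ⊢
  linarith

theorem dotProduct_inv_mulVec_le
    (hmin : IsMinOn (objective S G α) {Q | Q.PosDef} P) (hP : P.PosDef)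
    (hα : 0 ≤ α) (hG : ∀ i j, 0 ≤ G i j) (x : ι → ℝ) :
    x ⬝ᵥ P⁻¹ *ᵥ x ≤ x ⬝ᵥ S *ᵥ x + α * weightedAbsSum G (vecMulVec x x) := by
  refine le_of_isMinOn_mul_sub_log_one_add (isMinOn_iff.mpr fun ε (hε : 0 ≤ ε) => ?_)
  have hxx : (vecMulVec x x).PosSemidef := by simpa using posSemidef_vecMulVec_self_star x
  have hle := isMinOn_iff.mp hmin _ (hP.add_posSemidef (hxx.smul hε))
  have := objective_add_smul_vecMulVec_le (S := S) hP hα hG x hε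
  simp only [zero_mul, add_zero, Real.log_one, sub_zero]
  linarith

theorem sum_abs_le
    (hmin : IsMinOn (objective S G α) {Q | Q.PosDef} P) (hP : P.PosDef)
    (hS : S.PosSemidef) (hα : 0 < α) {g : ℝ} (hg : 0 < g) (hG : ∀ i j, g ≤ G i j) :
    ∑ i, ∑ j, |P i j| ≤ Fintype.card ι / (α * g) := by
  have hcard := trace_add_weightedAbsSum_eq_card hmin hP
  have htrace := hS.transpose.trace_mul_nonneg hP.posSemidef
  have habs := mul_sum_abs_le_weightedAbsSum (A := P) hG
  rw [le_div_iff₀ (mul_pos hα hg)]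
  nlinarith

theorem posSemidef_smul_one_sub
    (hmin : IsMinOn (objective S G α) {Q | Q.PosDef} P) (hP : P.PosDef)
    (hS : S.PosSemidef) (hα : 0 < α) {g : ℝ} (hg : 0 < g) (hG : ∀ i j, g ≤ G i j) :
    ((Fintype.card ι / (α * g)) • 1 - P).PosSemidef :=
  posSemidef_smul_one_sub_of_dotProduct_mulVec_le hP.isHermitian fun x =>
    (dotProduct_mulVec_le_sum_abs_mul P x).trans <| mul_le_mul_of_nonneg_right
      (sum_abs_le hmin hP hS hα hg hG) (sum_nonneg fun i _ => mul_self_nonneg (x i))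

theorem posSemidef_sub_smul_one
    (hmin : IsMinOn (objective S G α) {Q | Q.PosDef} P) (hP : P.PosDef)
    (hα : 0 ≤ α) (hG : ∀ i j, 0 ≤ G i j) :
    (P - (1 / (‖S‖ + α * √(∑ i, ∑ j, G i j ^ 2))) • 1).PosSemidef := by
  set K := ‖S‖ + α * √(∑ i, ∑ j, G i j ^ 2)
  have hK : 0 ≤ K := by positivity
  have hinv : ∀ x, x ⬝ᵥ P⁻¹ *ᵥ x ≤ K * (x ⬝ᵥ x) := fun x => by
    have hS := dotProduct_mulVec_le_l2_opNorm_mul S x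
    have hGx := mul_le_mul_of_nonneg_left (weightedAbsSum_vecMulVec_self_le G x) hα
    linarith [dotProduct_inv_mulVec_le hmin hP hα hG x]
  refine posSemidef_sub_smul_one_of_le_dotProduct_mulVec hP.isHermitian fun y => ?_
  rcases hK.eq_or_lt with hK0 | hKpos
  · -- `1 / 0 = 0`, so for `K = 0` the claim is `0 ≤ yᵀ P y`.
    simpa [← hK0] using hP.posSemidef.dotProduct_mulVec_nonneg y
  · rw [one_div, inv_mul_le_iff₀ hKpos]
    exact hP.dotProduct_self_le_mul_of_inv hinv y

end GraphicalLasso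

/-- if P̂ ≻ 0 minimizes `⟨S,P⟩ - log det P + α⟨G,|P|⟩` over P ≻ 0, with
S ⪰ 0, α > 0 and all entries of G at least G_min > 0, then
`σ_max(P̂) ≤ n/(α G_min)` and `σ_min(P̂) ≥ 1/(‖S‖₂ + α‖G‖_F)`. -/
theorem stmt_15 {n : ℕ} (S G : Matrix (Fin n) (Fin n) ℝ) (α Gmin : ℝ)
    (hα : 0 < α) (hGmin : 0 < Gmin) (hG : ∀ i j, Gmin ≤ G i j)
    (hS : S.PosSemidef)
    (F : Matrix (Fin n) (Fin n) ℝ → ℝ)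
    (hF : F = fun P => (Sᵀ * P).trace - Real.log P.det +
      α * ∑ i, ∑ j, G i j * |P i j|)
    (Phat : Matrix (Fin n) (Fin n) ℝ) (hPhat : Phat.PosDef)
    (hopt : ∀ P : Matrix (Fin n) (Fin n) ℝ, P.PosDef → F Phat ≤ F P) :
    (((n : ℝ) / (α * Gmin)) • (1 : Matrix (Fin n) (Fin n) ℝ) - Phat).PosSemidef ∧
      (Phat - (1 / (‖S‖ + α * Real.sqrt (∑ i, ∑ j, (G i j) ^ 2))) •
        (1 : Matrix (Fin n) (Fin n) ℝ)).PosSemidef := by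
  subst hF
  have hmin : IsMinOn (GraphicalLasso.objective S G α) {P | P.PosDef} Phat := fun P hP => hopt P hP
  refine ⟨?_, GraphicalLasso.posSemidef_sub_smul_one hmin hPhat hα.le fun i j =>
    hGmin.le.trans (hG i j)⟩
  simpa only [Fintype.card_fin] using
    GraphicalLasso.posSemidef_smul_one_sub hmin hPhat hS hα hGmin hG
end

section
/- Let F(Δ) = ⟨S, Δ + P*⟩ − log det(Δ + P*) + α⟨G, |Δ + P*|⟩ on F = {Δ ∈ 𝕊^n : a·I ⪯ Δ + P* ⪯ b·I}, where a·I ⪯ P* ⪯ b·I, 0 < a ≤ b, α > 0, and G has entries in (0, G_max]. Suppose |S_{ij} − C*_{ij}| ≤ α for all i,j, where C* = (P*)^{-1}. Then every Δ ∈ F with ‖Δ‖_F > 2b²(1 + G_max)αn satisfies F(Δ) > F(0). Consequently the minimizer Δ̂ of F over F satisfies ‖Δ̂‖_F ≤ 2b²(1 + G_max)αn. -/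
open Matrix

/-!
Write `F Δ - F 0` as a linear term `⟨S, Δ⟩`, a log-determinant term and a penalty term.
Strong concavity of `log det` on `{X : 0 < X ≤ b • 1}` with modulus `1 / b ^ 2` bounds the
log-determinant term below by `-⟨C*, Δ⟩ + ‖Δ‖_F ^ 2 / (2 b ^ 2)`; then `⟨S - C*, Δ⟩ ≥ -α ‖Δ‖₁`,
the penalty term is `≥ -α G_max ‖Δ‖₁` by the reverse triangle inequality, and
`‖Δ‖₁ ≤ n ‖Δ‖_F`. Altogether `F Δ - F 0 ≥ ‖Δ‖_F (‖Δ‖_F - 2 b ^ 2 (1 + G_max) α n) / (2 b ^ 2)`.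

Strong concavity of `log det` reduces to that of `log` on `(0, b]`: if `A = U diag(x) Uᵀ` and
`B = V diag(y) Vᵀ` with `U`, `V` orthogonal, the squared entries of `W = Uᵀ V` form a doubly
stochastic matrix, and `log det B - log det A`, `⟨A⁻¹, B - A⟩` and `‖B - A‖_F ^ 2` are the
`W ^ 2`-weighted sums of `log y_j - log x_i`, `(y_j - x_i) / x_i` and `(y_j - x_i) ^ 2`.
-/

namespace Real

theorem log_le_log_add_sub_div_sub_sq {x y b : ℝ} (hx : 0 < x) (hxb : x ≤ b) (hy : 0 < y)
    (hyb : y ≤ b) : log y ≤ log x + (y - x) / x - (y - x) ^ 2 / (2 * b ^ 2) := by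
  have hb : 0 < b := hx.trans_le hxb
  set φ : ℝ → ℝ := fun t => log t - (t - x) / x + (t - x) ^ 2 / (2 * b ^ 2)
  have hφ' : ∀ t, 0 < t → HasDerivAt φ ((t - x) * (x * t - b ^ 2) / (x * t * b ^ 2)) t := by
    intro t ht
    have h := ((hasDerivAt_log ht.ne').sub (((hasDerivAt_id t).sub_const x).div_const x)).add
      ((((hasDerivAt_id t).sub_const x).pow 2).div_const (2 * b ^ 2))
    refine h.congr_deriv ?_
    simp only [id, Nat.cast_ofNat]
    field_simp
    ring
  have hφc : ∀ c d, 0 < c → ContinuousOn φ (Set.Icc c d) := fun c d hc =>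
    HasDerivAt.continuousOn fun t ht => hφ' t (hc.trans_le ht.1)
  have hxt : ∀ t ≤ b, x * t ≤ b ^ 2 := fun t ht => by nlinarith
  -- `φ` increases on `(0, x]` and decreases on `[x, b]`.
  have hφx : φ x = log x := by simp [φ]
  suffices φ y ≤ φ x by rw [hφx] at this; simp only [φ] at this; linarith
  rcases le_total y x with hyx | hxy
  · refine monotoneOn_of_hasDerivWithinAt_nonneg (convex_Icc y x) (hφc y x hy)
      (fun t ht => (hφ' t ?_).hasDerivWithinAt) (fun t ht => ?_) ⟨le_rfl, hyx⟩ ⟨hyx, le_rfl⟩ hyx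
    all_goals rw [interior_Icc] at ht
    · exact hy.trans ht.1
    · have := hy.trans ht.1
      exact div_nonneg (mul_nonneg_of_nonpos_of_nonpos (by linarith [ht.2])
        (by linarith [hxt t (by linarith [ht.2])])) (by positivity)
  · refine antitoneOn_of_hasDerivWithinAt_nonpos (convex_Icc x b) (hφc x b hx)
      (fun t ht => (hφ' t ?_).hasDerivWithinAt) (fun t ht => ?_) ⟨le_rfl, hxb⟩ ⟨hxy, hyb⟩ hxy
    all_goals rw [interior_Icc] at ht
    · exact hx.trans ht.1
    · have := hx.trans ht.1
      exact div_nonpos_of_nonpos_of_nonneg (mul_nonpos_of_nonneg_of_nonpos (by linarith [ht.1])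
        (by linarith [hxt t ht.2.le])) (by positivity)

end Real

namespace Matrix

section Entrywise

variable {m n : Type*} [Fintype m] [Fintype n]

theorem trace_transpose_mul_eq_sum_sum (A B : Matrix m n ℝ) :
    (Aᵀ * B).trace = ∑ i, ∑ j, A i j * B i j := by
  simp only [trace, diag, mul_apply, transpose_apply]
  exact Finset.sum_comm

theorem sum_sum_sq_eq_trace_mul_transpose (M : Matrix m n ℝ) :
    ∑ i, ∑ j, M i j ^ 2 = (M * Mᵀ).trace := by
  simp [trace, mul_apply, sq]

theorem neg_mul_sum_sum_abs_le_sum_sum_mul {M Δ : Matrix m n ℝ} {α : ℝ}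
    (hM : ∀ i j, |M i j| ≤ α) : -(α * ∑ i, ∑ j, |Δ i j|) ≤ ∑ i, ∑ j, M i j * Δ i j := by
  simp only [Finset.mul_sum, ← Finset.sum_neg_distrib]
  gcongr with i _ j _
  calc -(α * |Δ i j|) ≤ -|M i j * Δ i j| := by rw [abs_mul]; gcongr; exact hM i j
    _ ≤ M i j * Δ i j := neg_abs_le _

theorem sum_sum_mul_abs_le_sum_sum_mul_abs_add {G X Δ : Matrix m n ℝ} {c : ℝ}
    (hG : ∀ i j, 0 ≤ G i j ∧ G i j ≤ c) :
    ∑ i, ∑ j, G i j * |X i j| ≤ ∑ i, ∑ j, G i j * |(Δ + X) i j| + c * ∑ i, ∑ j, |Δ i j| := by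
  simp only [Finset.mul_sum, ← Finset.sum_add_distrib]
  gcongr with i _ j _
  calc G i j * |X i j| ≤ G i j * (|(Δ + X) i j| + |Δ i j|) := by
        gcongr ?_ * ?_
        · exact (hG i j).1
        simpa using abs_sub ((Δ + X) i j) (Δ i j)
    _ ≤ G i j * |(Δ + X) i j| + c * |Δ i j| := by
        rw [mul_add]; gcongr; exact (hG i j).2

theorem sum_sum_abs_le_card_mul_sqrt_sum_sum_sq (M : Matrix m m ℝ) :
    ∑ i, ∑ j, |M i j| ≤ Fintype.card m * √(∑ i, ∑ j, M i j ^ 2) := by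
  have h := sq_sum_le_card_mul_sum_sq (s := Finset.univ ×ˢ Finset.univ)
    (f := fun p : m × m => |M p.1 p.2|)
  simp only [Finset.sum_product, Finset.card_product, Finset.card_univ, sq_abs,
    Nat.cast_mul] at h
  rw [← Real.sqrt_sq (Nat.cast_nonneg (Fintype.card m)), ← Real.sqrt_mul (sq_nonneg _)]
  exact Real.le_sqrt_of_sq_le (by linarith)

end Entrywise

theorem PosSemidef.posDef_of_sub_smul_one_s16 {n : Type*} [DecidableEq n] {A : Matrix n n ℝ} {a : ℝ}
    (h : (A - a • 1).PosSemidef) (ha : 0 < a) : A.PosDef := by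
  simpa using PosDef.posSemidef_add h (PosDef.one.smul ha)

variable {ι : Type*} [Fintype ι] [DecidableEq ι]

section Orthogonal

variable {U V W : Matrix ι ι ℝ} {x y : ι → ℝ}

theorem sum_sq_row_eq_one_of_mem_orthogonalGroup (hW : W ∈ orthogonalGroup ι ℝ) (i : ι) :
    ∑ j, W i j ^ 2 = 1 := by
  simpa [mul_apply, sq] using congrFun (congrFun ((mem_orthogonalGroup_iff ι ℝ).1 hW) i) i

theorem sum_sq_col_eq_one_of_mem_orthogonalGroup (hW : W ∈ orthogonalGroup ι ℝ) (j : ι) :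
    ∑ i, W i j ^ 2 = 1 := by
  simpa [mul_apply, sq] using congrFun (congrFun ((mem_orthogonalGroup_iff' ι ℝ).1 hW) j) j

theorem transpose_mul_mem_orthogonalGroup (hU : U ∈ orthogonalGroup ι ℝ)
    (hV : V ∈ orthogonalGroup ι ℝ) : Uᵀ * V ∈ orthogonalGroup ι ℝ := by
  rw [mem_orthogonalGroup_iff, transpose_mul, transpose_transpose, Matrix.mul_assoc,
    ← Matrix.mul_assoc V, (mem_orthogonalGroup_iff ι ℝ).1 hV, Matrix.one_mul,
    (mem_orthogonalGroup_iff' ι ℝ).1 hU]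

theorem sum_sum_sq_mul_mul_transpose (hU : U ∈ orthogonalGroup ι ℝ)
    (hV : V ∈ orthogonalGroup ι ℝ) (M : Matrix ι ι ℝ) :
    ∑ i, ∑ j, (U * M * Vᵀ) i j ^ 2 = ∑ i, ∑ j, M i j ^ 2 := by
  rw [sum_sum_sq_eq_trace_mul_transpose, sum_sum_sq_eq_trace_mul_transpose, transpose_mul,
    transpose_mul, transpose_transpose]
  calc (U * M * Vᵀ * (V * (Mᵀ * Uᵀ))).trace = (U * (M * (Vᵀ * V) * Mᵀ) * Uᵀ).trace := by
        simp only [Matrix.mul_assoc]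
    _ = (Uᵀ * U * (M * (Vᵀ * V) * Mᵀ)).trace := by
        rw [trace_mul_comm]; simp only [Matrix.mul_assoc]
    _ = (M * Mᵀ).trace := by
        rw [(mem_orthogonalGroup_iff' ι ℝ).1 hU, (mem_orthogonalGroup_iff' ι ℝ).1 hV,
          Matrix.one_mul, Matrix.mul_one]

theorem trace_diagonal_mul_mul_transpose (d : ι → ℝ) (M N : Matrix ι ι ℝ) :
    (diagonal d * M * Nᵀ).trace = ∑ i, ∑ j, d i * M i j * N i j := by
  simp [trace, mul_apply, diagonal_apply, Finset.mul_sum, mul_assoc]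

theorem det_mul_diagonal_mul_transpose (hU : U ∈ orthogonalGroup ι ℝ) (x : ι → ℝ) :
    (U * diagonal x * Uᵀ).det = ∏ i, x i := by
  rw [det_mul, det_mul, det_diagonal, mul_right_comm, ← det_mul,
    (mem_orthogonalGroup_iff ι ℝ).1 hU, det_one, one_mul]

theorem inv_mul_diagonal_mul_transpose (hU : U ∈ orthogonalGroup ι ℝ) (hx : ∀ i, x i ≠ 0) :
    (U * diagonal x * Uᵀ)⁻¹ = U * diagonal (fun i => (x i)⁻¹) * Uᵀ := by
  refine inv_eq_left_inv ?_
  calc U * diagonal (fun i => (x i)⁻¹) * Uᵀ * (U * diagonal x * Uᵀ)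
      = U * (diagonal (fun i => (x i)⁻¹) * (Uᵀ * U) * diagonal x) * Uᵀ := by
        simp only [Matrix.mul_assoc]
    _ = 1 := by
        rw [(mem_orthogonalGroup_iff' ι ℝ).1 hU, Matrix.mul_one, diagonal_mul_diagonal]
        simp [inv_mul_cancel₀ (hx _), (mem_orthogonalGroup_iff ι ℝ).1 hU]

theorem mul_diagonal_mul_transpose_sub (hU : U ∈ orthogonalGroup ι ℝ)
    (hV : V ∈ orthogonalGroup ι ℝ) :
    V * diagonal y * Vᵀ - U * diagonal x * Uᵀ =
      U * (Uᵀ * V * diagonal y - diagonal x * (Uᵀ * V)) * Vᵀ := by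
  simp only [Matrix.mul_sub, Matrix.sub_mul, Matrix.mul_assoc]
  rw [← Matrix.mul_assoc U Uᵀ, (mem_orthogonalGroup_iff ι ℝ).1 hU, Matrix.one_mul,
    (mem_orthogonalGroup_iff ι ℝ).1 hV, Matrix.mul_one]

theorem mul_diagonal_sub_diagonal_mul_apply (i j : ι) :
    (W * diagonal y - diagonal x * W) i j = W i j * (y j - x i) := by
  simp only [sub_apply, mul_diagonal, diagonal_mul]
  ring

theorem log_det_sub_log_det_eq_sum_sum (hU : U ∈ orthogonalGroup ι ℝ)
    (hV : V ∈ orthogonalGroup ι ℝ) (hx : ∀ i, x i ≠ 0) (hy : ∀ j, y j ≠ 0) :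
    Real.log (V * diagonal y * Vᵀ).det - Real.log (U * diagonal x * Uᵀ).det =
      ∑ i, ∑ j, (Uᵀ * V) i j ^ 2 * (Real.log (y j) - Real.log (x i)) := by
  have hW := transpose_mul_mem_orthogonalGroup hU hV
  rw [det_mul_diagonal_mul_transpose hV, det_mul_diagonal_mul_transpose hU,
    Real.log_prod fun j _ => hy j, Real.log_prod fun i _ => hx i]
  simp only [mul_sub, Finset.sum_sub_distrib]
  rw [Finset.sum_comm (f := fun i j => (Uᵀ * V) i j ^ 2 * Real.log (y j))]
  simp only [← Finset.sum_mul, sum_sq_row_eq_one_of_mem_orthogonalGroup hW,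
    sum_sq_col_eq_one_of_mem_orthogonalGroup hW, one_mul]

theorem trace_inv_mul_sub_eq_sum_sum (hU : U ∈ orthogonalGroup ι ℝ)
    (hV : V ∈ orthogonalGroup ι ℝ) (hx : ∀ i, x i ≠ 0) :
    ((U * diagonal x * Uᵀ)⁻¹ * (V * diagonal y * Vᵀ - U * diagonal x * Uᵀ)).trace =
      ∑ i, ∑ j, (Uᵀ * V) i j ^ 2 * ((y j - x i) / x i) := by
  set M := Uᵀ * V * diagonal y - diagonal x * (Uᵀ * V)
  rw [inv_mul_diagonal_mul_transpose hU hx, mul_diagonal_mul_transpose_sub hU hV]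
  calc (U * diagonal (fun i => (x i)⁻¹) * Uᵀ * (U * M * Vᵀ)).trace
      = (U * (diagonal (fun i => (x i)⁻¹) * (Uᵀ * U) * M * Vᵀ)).trace := by
        simp only [Matrix.mul_assoc]
    _ = (diagonal (fun i => (x i)⁻¹) * M * (Uᵀ * V)ᵀ).trace := by
        rw [trace_mul_comm, (mem_orthogonalGroup_iff' ι ℝ).1 hU, Matrix.mul_one]
        simp only [transpose_mul, transpose_transpose, Matrix.mul_assoc]
    _ = ∑ i, ∑ j, (Uᵀ * V) i j ^ 2 * ((y j - x i) / x i) := by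
        rw [trace_diagonal_mul_mul_transpose]
        simp only [M, mul_diagonal_sub_diagonal_mul_apply]
        congr! 2 with i - j -
        field_simp

theorem sum_sum_sq_sub_eq_sum_sum (hU : U ∈ orthogonalGroup ι ℝ)
    (hV : V ∈ orthogonalGroup ι ℝ) :
    ∑ i, ∑ j, (V * diagonal y * Vᵀ - U * diagonal x * Uᵀ) i j ^ 2 =
      ∑ i, ∑ j, (Uᵀ * V) i j ^ 2 * (y j - x i) ^ 2 := by
  rw [mul_diagonal_mul_transpose_sub hU hV, sum_sum_sq_mul_mul_transpose hU hV]
  simp only [mul_diagonal_sub_diagonal_mul_apply, mul_pow]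

end Orthogonal

theorem IsHermitian.exists_mem_orthogonalGroup_eq_mul_diagonal_mul_transpose
    {A : Matrix ι ι ℝ} (hA : A.IsHermitian) :
    ∃ U ∈ orthogonalGroup ι ℝ, A = U * diagonal hA.eigenvalues * Uᵀ := by
  refine ⟨hA.eigenvectorUnitary, hA.eigenvectorUnitary.2, ?_⟩
  conv_lhs => rw [hA.spectral_theorem]
  simp [Unitary.conjStarAlgAut_apply, star_eq_conjTranspose]

theorem IsHermitian.eigenvalues_le_of_posSemidef_smul_one_sub {A : Matrix ι ι ℝ}
    (hA : A.IsHermitian) {b : ℝ} (h : (b • 1 - A).PosSemidef) (i : ι) : hA.eigenvalues i ≤ b := by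
  obtain ⟨U, hU, hAU⟩ := hA.exists_mem_orthogonalGroup_eq_mul_diagonal_mul_transpose
  have hconj : Uᵀ * (b • 1 - A) * U = diagonal fun i => b - hA.eigenvalues i := by
    have hUU := (mem_orthogonalGroup_iff' ι ℝ).1 hU
    calc Uᵀ * (b • 1 - A) * U = b • (Uᵀ * U) - Uᵀ * U * diagonal hA.eigenvalues * (Uᵀ * U) := by
          conv_lhs => rw [hAU]
          simp only [Matrix.mul_sub, Matrix.sub_mul, Matrix.mul_smul, Matrix.smul_mul,
            Matrix.mul_one, Matrix.mul_assoc]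
      _ = diagonal fun i => b - hA.eigenvalues i := by
          rw [hUU, Matrix.one_mul, Matrix.mul_one, ← diagonal_one, ← diagonal_smul,
            diagonal_sub]
          simp
  have := h.conjTranspose_mul_mul_same U
  rw [conjTranspose_eq_transpose_of_trivial, hconj, posSemidef_diagonal_iff] at this
  simpa using this i

theorem PosDef.exists_mem_orthogonalGroup_eq_mul_diagonal_mul_transpose {A : Matrix ι ι ℝ}
    (hA : A.PosDef) {b : ℝ} (hAb : (b • 1 - A).PosSemidef) :
    ∃ U ∈ orthogonalGroup ι ℝ, ∃ x : ι → ℝ,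
      A = U * diagonal x * Uᵀ ∧ ∀ i, 0 < x i ∧ x i ≤ b := by
  obtain ⟨U, hU, hAU⟩ := hA.isHermitian.exists_mem_orthogonalGroup_eq_mul_diagonal_mul_transpose
  exact ⟨U, hU, _, hAU, fun i =>
    ⟨hA.eigenvalues_pos i, hA.isHermitian.eigenvalues_le_of_posSemidef_smul_one_sub hAb i⟩⟩

theorem PosDef.log_det_le_log_det_add_trace_sub {A B : Matrix ι ι ℝ} {b : ℝ} (hA : A.PosDef)
    (hB : B.PosDef) (hAb : (b • 1 - A).PosSemidef) (hBb : (b • 1 - B).PosSemidef) :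
    Real.log B.det ≤ Real.log A.det + (A⁻¹ * (B - A)).trace -
      (∑ i, ∑ j, (B - A) i j ^ 2) / (2 * b ^ 2) := by
  obtain ⟨U, hU, x, rfl, hx⟩ :=
    hA.exists_mem_orthogonalGroup_eq_mul_diagonal_mul_transpose hAb
  obtain ⟨V, hV, y, rfl, hy⟩ :=
    hB.exists_mem_orthogonalGroup_eq_mul_diagonal_mul_transpose hBb
  have hx0 : ∀ i, x i ≠ 0 := fun i => (hx i).1.ne'
  have key : ∀ i j, (Uᵀ * V) i j ^ 2 * (Real.log (y j) - Real.log (x i)) ≤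
      (Uᵀ * V) i j ^ 2 * ((y j - x i) / x i) - (Uᵀ * V) i j ^ 2 * (y j - x i) ^ 2 / (2 * b ^ 2) :=
    fun i j => by
      rw [mul_div_assoc, ← mul_sub]
      exact mul_le_mul_of_nonneg_left (by
        linarith [Real.log_le_log_add_sub_div_sub_sq (hx i).1 (hx i).2 (hy j).1 (hy j).2])
        (sq_nonneg _)
  have hsum := Finset.sum_le_sum fun i (_ : i ∈ Finset.univ) =>
    Finset.sum_le_sum fun j (_ : j ∈ Finset.univ) => key i j
  simp only [Finset.sum_sub_distrib, ← Finset.sum_div] at hsum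
  rw [← log_det_sub_log_det_eq_sum_sum hU hV hx0 fun j => (hy j).1.ne',
    ← trace_inv_mul_sub_eq_sum_sum hU hV hx0, ← sum_sum_sq_sub_eq_sum_sum hU hV] at hsum
  linarith

end Matrix

section GraphicalLasso

variable {ι : Type*} [Fintype ι] [DecidableEq ι]

noncomputable def graphicalLassoObjective (S G : Matrix ι ι ℝ) (α : ℝ) (X : Matrix ι ι ℝ) : ℝ :=
  (Sᵀ * X).trace - Real.log X.det + α * ∑ i, ∑ j, G i j * |X i j|

variable {S G P Δ : Matrix ι ι ℝ} {α b c : ℝ}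

theorem le_graphicalLassoObjective_add_sub (hΔ : Δ.IsSymm) (hP : P.PosDef) (hΔP : (Δ + P).PosDef)
    (hPb : (b • 1 - P).PosSemidef) (hΔPb : (b • 1 - (Δ + P)).PosSemidef) (hα : 0 ≤ α)
    (hG : ∀ i j, 0 ≤ G i j ∧ G i j ≤ c) (hSP : ∀ i j, |S i j - P⁻¹ i j| ≤ α) :
    (∑ i, ∑ j, Δ i j ^ 2) / (2 * b ^ 2) - α * (1 + c) * ∑ i, ∑ j, |Δ i j| ≤
      graphicalLassoObjective S G α (Δ + P) - graphicalLassoObjective S G α P := by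
  have hlogdet := hP.log_det_le_log_det_add_trace_sub hΔP hPb hΔPb
  rw [add_sub_cancel_right] at hlogdet
  have hS := trace_transpose_mul_eq_sum_sum S Δ
  have hC : (P⁻¹ * Δ).trace = ∑ i, ∑ j, Δ i j * P⁻¹ i j := by
    rw [trace_mul_comm, ← trace_transpose_mul_eq_sum_sum, hΔ.eq]
  have hSC : ∑ i, ∑ j, (S - P⁻¹) i j * Δ i j =
      ∑ i, ∑ j, S i j * Δ i j - ∑ i, ∑ j, Δ i j * P⁻¹ i j := by
    simp only [Matrix.sub_apply, sub_mul, Finset.sum_sub_distrib, mul_comm (P⁻¹ _ _)]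
  have hlin := neg_mul_sum_sum_abs_le_sum_sum_mul (M := S - P⁻¹) (Δ := Δ) hSP
  have hpen := mul_le_mul_of_nonneg_left
    (sum_sum_mul_abs_le_sum_sum_mul_abs_add (X := P) (Δ := Δ) hG) hα
  simp only [graphicalLassoObjective, Matrix.mul_add, trace_add]
  linarith

theorem graphicalLassoObjective_lt_add (hb : 0 < b) (hα : 0 ≤ α) (hc : 0 ≤ c)
    (hΔ : Δ.IsSymm) (hP : P.PosDef) (hΔP : (Δ + P).PosDef)
    (hPb : (b • 1 - P).PosSemidef) (hΔPb : (b • 1 - (Δ + P)).PosSemidef)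
    (hG : ∀ i j, 0 ≤ G i j ∧ G i j ≤ c) (hSP : ∀ i j, |S i j - P⁻¹ i j| ≤ α)
    (hr : 2 * b ^ 2 * (1 + c) * α * Fintype.card ι < √(∑ i, ∑ j, Δ i j ^ 2)) :
    graphicalLassoObjective S G α P < graphicalLassoObjective S G α (Δ + P) := by
  have hgap := le_graphicalLassoObjective_add_sub hΔ hP hΔP hPb hΔPb hα hG hSP
  have hl1 := sum_sum_abs_le_card_mul_sqrt_sum_sum_sq Δ
  set r := √(∑ i, ∑ j, Δ i j ^ 2)
  set N : ℝ := (Fintype.card ι : ℝ)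
  rw [← Real.sq_sqrt (by positivity : (0 : ℝ) ≤ ∑ i, ∑ j, Δ i j ^ 2)] at hgap
  have hr0 : 0 < r := lt_of_le_of_lt (by positivity) hr
  have hquad : α * (1 + c) * (N * r) < r ^ 2 / (2 * b ^ 2) := by
    rw [lt_div_iff₀ (by positivity)]
    calc α * (1 + c) * (N * r) * (2 * b ^ 2) = 2 * b ^ 2 * (1 + c) * α * N * r := by ring
      _ < r * r := mul_lt_mul_of_pos_right hr hr0
      _ = r ^ 2 := (sq r).symm
  linarith [mul_le_mul_of_nonneg_left hl1 (by positivity : 0 ≤ α * (1 + c))]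

end GraphicalLasso

theorem stmt_16_general {n : ℕ} (S Pstar G : Matrix (Fin n) (Fin n) ℝ)
    (a b α Gmax : ℝ) (ha : 0 < a) (hab : a ≤ b) (hα : 0 < α)
    (hPa : (Pstar - a • (1 : Matrix (Fin n) (Fin n) ℝ)).PosSemidef)
    (hPb : (b • (1 : Matrix (Fin n) (Fin n) ℝ) - Pstar).PosSemidef)
    (hG : ∀ i j, 0 < G i j ∧ G i j ≤ Gmax)
    (hSC : ∀ i j, |S i j - (Pstar⁻¹) i j| ≤ α)
    (F : Matrix (Fin n) (Fin n) ℝ → ℝ)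
    (hF : F = fun Δ => (Sᵀ * (Δ + Pstar)).trace - Real.log (Δ + Pstar).det +
      α * ∑ i, ∑ j, G i j * |(Δ + Pstar) i j|)
    (feas : Matrix (Fin n) (Fin n) ℝ → Prop)
    (hfeas : feas = fun Δ => Δ.IsSymm ∧
      (Δ + Pstar - a • (1 : Matrix (Fin n) (Fin n) ℝ)).PosSemidef ∧
      (b • (1 : Matrix (Fin n) (Fin n) ℝ) - (Δ + Pstar)).PosSemidef) :
    (∀ Δ : Matrix (Fin n) (Fin n) ℝ, feas Δ →
      2 * b ^ 2 * (1 + Gmax) * α * n < Real.sqrt (∑ i, ∑ j, (Δ i j) ^ 2) →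
      F 0 < F Δ) ∧
    ∀ Δhat : Matrix (Fin n) (Fin n) ℝ, feas Δhat →
      (∀ Δ : Matrix (Fin n) (Fin n) ℝ, feas Δ → F Δhat ≤ F Δ) →
      Real.sqrt (∑ i, ∑ j, (Δhat i j) ^ 2) ≤ 2 * b ^ 2 * (1 + Gmax) * α * n := by
  have grows : ∀ Δ, feas Δ → 2 * b ^ 2 * (1 + Gmax) * α * n < √(∑ i, ∑ j, Δ i j ^ 2) →
      F 0 < F Δ := by
    subst hF hfeas
    rintro Δ ⟨hΔ, hΔa, hΔb⟩ hr
    have hn : 0 < n := Nat.pos_of_ne_zero (by rintro rfl; simp at hr)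
    have hGmax : 0 ≤ Gmax := (hG ⟨0, hn⟩ ⟨0, hn⟩).1.le.trans (hG _ _).2
    have hlt := graphicalLassoObjective_lt_add (ha.trans_le hab) hα.le hGmax hΔ
      (hPa.posDef_of_sub_smul_one_s16 ha) (hΔa.posDef_of_sub_smul_one_s16 ha) hPb hΔb
      (fun i j => ⟨(hG i j).1.le, (hG i j).2⟩) hSC (by rwa [Fintype.card_fin])
    simpa [graphicalLassoObjective] using hlt
  refine ⟨grows, fun Δhat hΔhat hmin => not_lt.1 fun hr => (grows Δhat hΔhat hr).not_ge ?_⟩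
  exact hmin 0 (hfeas ▸ ⟨isSymm_zero, by simpa using hPa, by simpa using hPb⟩)

/-- Let `F(Δ) = ⟨S, Δ+P*⟩ - log det(Δ+P*) + α⟨G,|Δ+P*|⟩` on the feasible
set `{Δ symmetric : a·I ⪯ Δ+P* ⪯ b·I}`, where a·I ⪯ P* ⪯ b·I, 0 < a ≤ b, α > 0, G has
entries in (0, G_max], and `|S_{ij} - C*_{ij}| ≤ α` for all i,j with C* = (P*)⁻¹.
Then every feasible Δ with `‖Δ‖_F > 2b²(1+G_max)αn` satisfies F(Δ) > F(0); consequently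
any minimizer Δ̂ of F over the feasible set satisfies `‖Δ̂‖_F ≤ 2b²(1+G_max)αn`. -/
theorem stmt_16 {n : ℕ} (S Pstar G : Matrix (Fin n) (Fin n) ℝ)
    (a b α Gmax : ℝ) (ha : 0 < a) (hab : a ≤ b) (hα : 0 < α)
    (hSsymm : S.IsSymm) (hPsymm : Pstar.IsSymm)
    (hPa : (Pstar - a • (1 : Matrix (Fin n) (Fin n) ℝ)).PosSemidef)
    (hPb : (b • (1 : Matrix (Fin n) (Fin n) ℝ) - Pstar).PosSemidef)
    (hG : ∀ i j, 0 < G i j ∧ G i j ≤ Gmax)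
    (hSC : ∀ i j, |S i j - (Pstar⁻¹) i j| ≤ α)
    (F : Matrix (Fin n) (Fin n) ℝ → ℝ)
    (hF : F = fun Δ => (Sᵀ * (Δ + Pstar)).trace - Real.log (Δ + Pstar).det +
      α * ∑ i, ∑ j, G i j * |(Δ + Pstar) i j|)
    (feas : Matrix (Fin n) (Fin n) ℝ → Prop)
    (hfeas : feas = fun Δ => Δ.IsSymm ∧
      (Δ + Pstar - a • (1 : Matrix (Fin n) (Fin n) ℝ)).PosSemidef ∧
      (b • (1 : Matrix (Fin n) (Fin n) ℝ) - (Δ + Pstar)).PosSemidef) :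
    (∀ Δ : Matrix (Fin n) (Fin n) ℝ, feas Δ →
      2 * b ^ 2 * (1 + Gmax) * α * n < Real.sqrt (∑ i, ∑ j, (Δ i j) ^ 2) →
      F 0 < F Δ) ∧
    ∀ Δhat : Matrix (Fin n) (Fin n) ℝ, feas Δhat →
      (∀ Δ : Matrix (Fin n) (Fin n) ℝ, feas Δ → F Δhat ≤ F Δ) →
      Real.sqrt (∑ i, ∑ j, (Δhat i j) ^ 2) ≤ 2 * b ^ 2 * (1 + Gmax) * α * n :=
  stmt_16_general S Pstar G a b α Gmax ha hab hα hPa hPb hG hSC F hF feas hfeas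
end
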